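/- arXiv:2204.02535 — 8 statements merged into one kernel-verified Lean document; each statement's English description precedes it below -/
import Mathlib

section
/- Let s(n) denote the number of strictly decreasing partitions (λ₁ > λ₂ > λ₃ > ⋯) of positive integers such that λ₁ + λ₃ + λ₅ + ⋯ = n. Then s(n) equals p(n), the number of all (unrestricted) partitions of n, for every n ≥ 1. -/
/-- `l` is a partition: a weakly decreasing list of positive integers. -/
def IsPartition (l : List ℕ) : Prop :=
  l.Pairwise (· ≥ ·) ∧ ∀ x ∈ l, 0 < x

/-- `l` is a strict partition: a strictly decreasing list of positive integers. -/
def IsStrict (l : List ℕ) : Prop :=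
  l.Pairwise (· > ·) ∧ ∀ x ∈ l, 0 < x

/-- Sum of the parts of `l` in positions `1, k+1, 2k+1, …` (0-indexed `0, k, 2k, …`). -/
def schmidtSum (k : ℕ) (l : List ℕ) : ℕ :=
  ∑ i ∈ Finset.range l.length, if i % k = 0 then l.getD i 0 else 0

/-!
Let `T b n` count the strict partitions with parts `≤ b` and `λ₁ + λ₃ + ⋯ = n`, and `U b n` those
with parts `≤ b` and `λ₂ + λ₄ + ⋯ = n` (that is, `schmidtSum 2 l.tail = n`). Splitting off a
largest part `b + 1` gives `T (b+1) n = T b n + U b (n - b - 1)` and `U (b+1) n = U b n + T b n`.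

For a partition `μ` let `h μ = μ₁ + ℓ(μ)`, the half-perimeter of the bounding box of its Young
diagram. The same two recursions hold for the number of partitions of `n` with `h μ ≤ b + 1` and
for `∑ (b + 1 - h μ)`, the number of pairs of a partition `μ` of `n` and a box `a × (b - a)`
containing it. The second recursion is immediate. For the first, removing the hook of the corner
cell is a bijection from the partitions of `n` with `h μ = b + 2` to the partitions of
`n - b - 1` placed in a box `a × (b - a)`. The parts of a strict partition counted by `s(n)` are
at most `n`, and so is `h μ - 1` for every partition `μ` of `n`; hence `b = n` gives `s(n) = p(n)`.
-/

open Finset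

theorem schmidtSum_nil (k : ℕ) : schmidtSum k [] = 0 := rfl

theorem schmidtSum_two_cons (x : ℕ) (t : List ℕ) :
    schmidtSum 2 (x :: t) = x + schmidtSum 2 t.tail := by
  cases t with
  | nil => simp [schmidtSum]
  | cons y t =>
    simp only [schmidtSum, List.length_cons, List.tail_cons, sum_range_succ']
    have hmod (i : ℕ) : (i + 1 + 1) % 2 = i % 2 := by omega
    simp only [hmod, List.getD_cons_succ, List.getD_cons_zero]
    simp [add_comm]

theorem le_schmidtSum_two_of_mem {l : List ℕ} (hl : l.Pairwise (· ≥ ·)) {x : ℕ} (hx : x ∈ l) :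
    x ≤ schmidtSum 2 l := by
  cases l with
  | nil => simp at hx
  | cons y t =>
    rw [schmidtSum_two_cons]
    rcases List.mem_cons.1 hx with rfl | hx
    · exact Nat.le_add_right _ _
    · exact (List.rel_of_pairwise_cons hl hx).trans (Nat.le_add_right _ _)

theorem isStrict_cons {x : ℕ} {t : List ℕ} :
    IsStrict (x :: t) ↔ (∀ y ∈ t, y < x) ∧ IsStrict t ∧ 0 < x := by
  simp only [IsStrict, List.pairwise_cons, List.mem_cons, forall_eq_or_imp]
  tauto

def strictUpTo : ℕ → Finset (List ℕ)
  | 0 => {[]}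
  | b + 1 => strictUpTo b ∪ (strictUpTo b).image (List.cons (b + 1))

theorem mem_strictUpTo {b : ℕ} {l : List ℕ} :
    l ∈ strictUpTo b ↔ IsStrict l ∧ ∀ x ∈ l, x ≤ b := by
  induction b generalizing l with
  | zero =>
    cases l with
    | nil => simp [strictUpTo, IsStrict]
    | cons x t =>
      simp only [strictUpTo, mem_singleton, reduceCtorEq, false_iff, isStrict_cons,
        List.mem_cons, forall_eq_or_imp, nonpos_iff_eq_zero]
      omega
  | succ b ih =>
    simp only [strictUpTo, mem_union, mem_image, ih]
    constructor
    · rintro (⟨hs, hb⟩ | ⟨t, ⟨hs, hb⟩, rfl⟩)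
      · exact ⟨hs, fun x hx => (hb x hx).trans b.le_succ⟩
      · refine ⟨isStrict_cons.2 ⟨fun y hy => Nat.lt_succ_of_le (hb y hy), hs, b.succ_pos⟩, ?_⟩
        simpa using fun y hy => (hb y hy).trans b.le_succ
    · rintro ⟨hs, hb⟩
      cases l with
      | nil => exact Or.inl ⟨hs, by simp⟩
      | cons x t =>
        obtain ⟨hlt, ht, -⟩ := isStrict_cons.1 hs
        by_cases hx : x ≤ b
        · refine Or.inl ⟨hs, ?_⟩
          simpa using ⟨hx, fun y hy => (hlt y hy).le.trans hx⟩
        · obtain rfl : x = b + 1 := by have := hb x (by simp); omega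
          exact Or.inr ⟨t, ⟨ht, fun y hy => Nat.le_of_lt_succ (hlt y hy)⟩, rfl⟩

theorem mem_filter_strictUpTo_schmidtSum {n : ℕ} {l : List ℕ} :
    l ∈ {l ∈ strictUpTo n | schmidtSum 2 l = n} ↔ IsStrict l ∧ schmidtSum 2 l = n := by
  rw [mem_filter, mem_strictUpTo]
  refine ⟨fun ⟨⟨hs, _⟩, hsum⟩ => ⟨hs, hsum⟩, fun ⟨hs, hsum⟩ => ⟨⟨hs, fun x hx => ?_⟩, hsum⟩⟩
  exact hsum ▸ le_schmidtSum_two_of_mem (hs.1.imp le_of_lt) hx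

theorem card_filter_strictUpTo_succ (b : ℕ) {p q : List ℕ → Prop} [DecidablePred p]
    [DecidablePred q] (hpq : ∀ l, p ((b + 1) :: l) ↔ q l) :
    #{l ∈ strictUpTo (b + 1) | p l} = #{l ∈ strictUpTo b | p l} + #{l ∈ strictUpTo b | q l} := by
  rw [strictUpTo, filter_union, filter_image, card_union_of_disjoint,
    card_image_of_injective _ List.cons_injective, filter_congr fun l _ => hpq l]
  rw [disjoint_left]
  intro l hl hl'
  obtain ⟨t, -, rfl⟩ := mem_image.1 hl'
  have := (mem_strictUpTo.1 (mem_filter.1 hl).1).2 (b + 1) (by simp)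
  omega

theorem Multiset.sup_mem {α : Type*} [LinearOrder α] [OrderBot α] {M : Multiset α} (hM : M ≠ 0) :
    M.sup ∈ M := by
  induction M using Multiset.induction_on with
  | empty => exact absurd rfl hM
  | cons a s ih =>
    rw [Multiset.sup_cons]
    rcases eq_or_ne s 0 with rfl | hs
    · simp
    · rcases le_total a s.sup with h | h
      · rw [sup_eq_right.2 h]
        exact Multiset.mem_cons_of_mem (ih hs)
      · rw [sup_eq_left.2 h]
        exact Multiset.mem_cons_self a s

def partitionsOf (n : ℕ) : Finset (Multiset ℕ) :=
  (univ : Finset (Nat.Partition n)).map ⟨Nat.Partition.parts, fun _ _ => Nat.Partition.ext⟩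

theorem mem_partitionsOf {n : ℕ} {M : Multiset ℕ} :
    M ∈ partitionsOf n ↔ (∀ x ∈ M, 0 < x) ∧ M.sum = n := by
  simp only [partitionsOf, mem_map, mem_univ, true_and]
  constructor
  · rintro ⟨μ, rfl⟩
    exact ⟨fun _ => μ.parts_pos, μ.parts_sum⟩
  · rintro ⟨hpos, hsum⟩
    exact ⟨⟨M, hpos _, hsum⟩, rfl⟩

theorem card_partitionsOf (n : ℕ) : #(partitionsOf n) = Fintype.card (Nat.Partition n) :=
  card_map _

def halfPerimeter (M : Multiset ℕ) : ℕ := M.sup + Multiset.card M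

section Hook

variable {M : Multiset ℕ}

theorem one_le_sup_of_pos (hpos : ∀ x ∈ M, 0 < x) (hM : M ≠ 0) : 1 ≤ M.sup :=
  hpos _ (Multiset.sup_mem hM)

theorem halfPerimeter_le_sum_add_one (hpos : ∀ x ∈ M, 0 < x) : halfPerimeter M ≤ M.sum + 1 := by
  rcases eq_or_ne M 0 with rfl | hM
  · simp [halfPerimeter]
  have hsplit := Multiset.cons_erase (Multiset.sup_mem hM)
  have hsum : M.sum = M.sup + (M.erase M.sup).sum := by rw [← Multiset.sum_cons, hsplit]
  have hcard : Multiset.card M = Multiset.card (M.erase M.sup) + 1 := by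
    rw [← Multiset.card_cons, hsplit]
  have hrest := Multiset.card_nsmul_le_sum (s := M.erase M.sup) (a := 1)
    fun x hx => hpos x (Multiset.mem_of_mem_erase hx)
  rw [smul_eq_mul, mul_one] at hrest
  rw [halfPerimeter]
  omega

theorem halfPerimeter_le_of_mem_partitionsOf {n : ℕ} (hM : M ∈ partitionsOf n) :
    halfPerimeter M ≤ n + 1 :=
  (mem_partitionsOf.1 hM).2 ▸ halfPerimeter_le_sum_add_one (mem_partitionsOf.1 hM).1

theorem halfPerimeter_le_one_iff (hpos : ∀ x ∈ M, 0 < x) : halfPerimeter M ≤ 1 ↔ M = 0 := by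
  refine ⟨fun h => ?_, fun h => by simp [h, halfPerimeter]⟩
  by_contra hM
  have := one_le_sup_of_pos hpos hM
  have := Multiset.card_pos.2 hM
  unfold halfPerimeter at h
  omega

/-- Adds to `ρ` a hook with arm `a` and leg `l`: a new first row of length `a + 1` and a new first
column of length `l + 1` (parts `1` fill the column below the rows of `ρ`). -/
def hookAttach (a l : ℕ) (ρ : Multiset ℕ) : Multiset ℕ :=
  (a + 1) ::ₘ (ρ.map (· + 1) + Multiset.replicate (l - Multiset.card ρ) 1)

def hookRemove (M : Multiset ℕ) : Multiset ℕ :=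
  ((M.erase M.sup).filter (1 < ·)).map (· - 1)

variable {a l : ℕ} {ρ : Multiset ℕ}

theorem pos_of_mem_hookAttach {x : ℕ} (hx : x ∈ hookAttach a l ρ) : 0 < x := by
  simp only [hookAttach, Multiset.mem_cons, Multiset.mem_add, Multiset.mem_map,
    Multiset.mem_replicate] at hx
  omega

theorem sup_hookAttach (h : ∀ x ∈ ρ, x ≤ a) : (hookAttach a l ρ).sup = a + 1 := by
  refine le_antisymm (Multiset.sup_le.2 fun x hx => ?_) (Multiset.le_sup (by simp [hookAttach]))
  simp only [hookAttach, Multiset.mem_cons, Multiset.mem_add, Multiset.mem_map,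
    Multiset.mem_replicate] at hx
  rcases hx with rfl | ⟨y, hy, rfl⟩ | ⟨-, rfl⟩
  · rfl
  · exact Nat.succ_le_succ (h y hy)
  · omega

theorem card_hookAttach (h : Multiset.card ρ ≤ l) : Multiset.card (hookAttach a l ρ) = l + 1 := by
  simp only [hookAttach, Multiset.card_cons, Multiset.card_add, Multiset.card_map,
    Multiset.card_replicate]
  omega

theorem sum_hookAttach (h : Multiset.card ρ ≤ l) :
    (hookAttach a l ρ).sum = ρ.sum + a + l + 1 := by
  simp only [hookAttach, Multiset.sum_cons, Multiset.sum_add, Multiset.sum_map_add,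
    Multiset.map_id', Multiset.map_const', Multiset.sum_replicate, smul_eq_mul, mul_one]
  omega

theorem hookRemove_hookAttach (hpos : ∀ x ∈ ρ, 0 < x) (h : ∀ x ∈ ρ, x ≤ a) :
    hookRemove (hookAttach a l ρ) = ρ := by
  rw [hookRemove, sup_hookAttach h, hookAttach, Multiset.erase_cons_head, Multiset.filter_add,
    Multiset.filter_eq_self.2, Multiset.filter_eq_nil.2, add_zero, Multiset.map_map]
  · simp
  · intro x hx
    rw [Multiset.eq_of_mem_replicate hx]
    exact lt_irrefl 1
  · simpa using fun x hx => hpos x hx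

theorem pos_of_mem_hookRemove {x : ℕ} (hx : x ∈ hookRemove M) : 0 < x := by
  obtain ⟨y, hy, rfl⟩ := Multiset.mem_map.1 hx
  have := Multiset.of_mem_filter hy
  omega

theorem le_of_mem_hookRemove {x : ℕ} (hx : x ∈ hookRemove M) : x ≤ M.sup - 1 := by
  obtain ⟨y, hy, rfl⟩ := Multiset.mem_map.1 hx
  exact Nat.sub_le_sub_right (Multiset.le_sup
    (Multiset.mem_of_mem_erase (Multiset.mem_of_mem_filter hy))) 1

theorem card_hookRemove_le : Multiset.card (hookRemove M) ≤ Multiset.card M - 1 := by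
  rcases eq_or_ne M 0 with rfl | hM
  · simp [hookRemove]
  rw [hookRemove, Multiset.card_map, ← Nat.pred_eq_sub_one,
    ← Multiset.card_erase_of_mem (Multiset.sup_mem hM)]
  exact Multiset.card_le_card (Multiset.filter_le _ _)

theorem hookAttach_hookRemove (hpos : ∀ x ∈ M, 0 < x) (hM : M ≠ 0) :
    hookAttach (M.sup - 1) (Multiset.card M - 1) (hookRemove M) = M := by
  set E := M.erase M.sup
  have hmem := Multiset.sup_mem hM
  have hE : ∀ x ∈ E, 0 < x := fun x hx => hpos x (Multiset.mem_of_mem_erase hx)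
  have hcard : Multiset.card M - 1 = Multiset.card E := by
    rw [Multiset.card_erase_of_mem hmem, Nat.pred_eq_sub_one]
  have hones : E.filter (fun x => ¬ 1 < x) =
      Multiset.replicate (Multiset.card E - Multiset.card (E.filter (1 < ·))) 1 := by
    refine Multiset.eq_replicate.2 ⟨?_, fun x hx => ?_⟩
    · have := congrArg Multiset.card (Multiset.filter_add_not (1 < ·) E)
      rw [Multiset.card_add] at this
      omega
    · have := Multiset.of_mem_filter hx
      have := hE x (Multiset.mem_of_mem_filter hx)
      omega
  have hshift : ((E.filter (1 < ·)).map (· - 1)).map (· + 1) = E.filter (1 < ·) := by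
    rw [Multiset.map_map]
    conv_rhs => rw [← Multiset.map_id (E.filter (1 < ·))]
    refine Multiset.map_congr rfl fun x hx => ?_
    have := Multiset.of_mem_filter hx
    simp only [Function.comp_apply, id]
    omega
  rw [hookAttach, hookRemove, Nat.sub_add_cancel (one_le_sup_of_pos hpos hM), hshift, hcard,
    Multiset.card_map, ← hones, Multiset.filter_add_not, Multiset.cons_erase hmem]

theorem sum_hookRemove (hpos : ∀ x ∈ M, 0 < x) (hM : M ≠ 0) :
    (hookRemove M).sum + M.sup + Multiset.card M = M.sum + 1 := by
  conv_rhs => rw [← hookAttach_hookRemove hpos hM]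
  rw [sum_hookAttach card_hookRemove_le]
  have := one_le_sup_of_pos hpos hM
  have := Multiset.card_pos.2 hM
  omega

end Hook

theorem hookRemove_mem_sigma {m b : ℕ} {M : Multiset ℕ}
    (hM : M ∈ {M ∈ partitionsOf (m + b + 1) | halfPerimeter M = b + 2}) :
    (⟨hookRemove M, M.sup - 1 - (hookRemove M).sup⟩ : Σ _ : Multiset ℕ, ℕ) ∈
      (partitionsOf m).sigma fun ρ => range (b + 1 - halfPerimeter ρ) := by
  obtain ⟨⟨hpos, hsum⟩, hper⟩ := by simpa only [mem_filter, mem_partitionsOf] using hM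
  have hM0 : M ≠ 0 := by rintro rfl; simp [halfPerimeter] at hper
  have hsup := Multiset.sup_le.2 fun x hx => le_of_mem_hookRemove (M := M) hx
  have := sum_hookRemove hpos hM0
  have := card_hookRemove_le (M := M)
  have := Multiset.card_pos.2 hM0
  have := one_le_sup_of_pos hpos hM0
  simp only [mem_sigma, mem_partitionsOf, mem_range]
  unfold halfPerimeter at hper ⊢
  exact ⟨⟨fun x hx => pos_of_mem_hookRemove hx, by omega⟩, by omega⟩

theorem hookAttach_mem_filter {m b k : ℕ} {ρ : Multiset ℕ} (hρ : ρ ∈ partitionsOf m)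
    (hk : k < b + 1 - halfPerimeter ρ) :
    hookAttach (ρ.sup + k) (b - ρ.sup - k) ρ ∈
      {M ∈ partitionsOf (m + b + 1) | halfPerimeter M = b + 2} := by
  obtain ⟨hpos, hsum⟩ := mem_partitionsOf.1 hρ
  have hle : ∀ x ∈ ρ, x ≤ ρ.sup + k :=
    fun x hx => (Multiset.le_sup hx).trans (Nat.le_add_right _ _)
  unfold halfPerimeter at hk
  have hcard : Multiset.card ρ ≤ b - ρ.sup - k := by omega
  rw [mem_filter, mem_partitionsOf, halfPerimeter, sum_hookAttach hcard, sup_hookAttach hle,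
    card_hookAttach hcard]
  exact ⟨⟨fun x hx => pos_of_mem_hookAttach hx, by omega⟩, by omega⟩

theorem card_filter_halfPerimeter_eq (m b : ℕ) :
    #{M ∈ partitionsOf (m + b + 1) | halfPerimeter M = b + 2} =
      ∑ ρ ∈ partitionsOf m, (b + 1 - halfPerimeter ρ) := by
  rw [show ∑ ρ ∈ partitionsOf m, (b + 1 - halfPerimeter ρ) =
      #((partitionsOf m).sigma fun ρ => range (b + 1 - halfPerimeter ρ)) by
    rw [card_sigma]; simp only [card_range]]
  -- the second coordinate is the excess of the arm of the hook over the largest part of `ρ`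
  refine card_bij' (fun M _ => ⟨hookRemove M, M.sup - 1 - (hookRemove M).sup⟩)
    (fun p _ => hookAttach (p.1.sup + p.2) (b - p.1.sup - p.2) p.1)
    (fun M hM => hookRemove_mem_sigma hM)
    (fun p hp => hookAttach_mem_filter (mem_sigma.1 hp).1 (mem_range.1 (mem_sigma.1 hp).2))
    (fun M hM => ?_) (fun p hp => ?_)
  · obtain ⟨⟨hpos, -⟩, hper⟩ := by simpa only [mem_filter, mem_partitionsOf] using hM
    have hM0 : M ≠ 0 := by rintro rfl; simp [halfPerimeter] at hper
    have hsup := Multiset.sup_le.2 fun x hx => le_of_mem_hookRemove (M := M) hx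
    have := one_le_sup_of_pos hpos hM0
    dsimp only
    conv_rhs => rw [← hookAttach_hookRemove hpos hM0]
    unfold halfPerimeter at hper
    congr 1 <;> omega
  · obtain ⟨ρ, k⟩ := p
    have hpos := (mem_partitionsOf.1 (mem_sigma.1 hp).1).1
    have hle : ∀ x ∈ ρ, x ≤ ρ.sup + k :=
      fun x hx => (Multiset.le_sup hx).trans (Nat.le_add_right _ _)
    simp only [hookRemove_hookAttach hpos hle, sup_hookAttach hle]
    congr 1
    omega

theorem card_filter_strictUpTo_zero (n : ℕ) :
    #{l ∈ strictUpTo 0 | schmidtSum 2 l = n} = #{M ∈ partitionsOf n | halfPerimeter M ≤ 0 + 1} ∧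
      #{l ∈ strictUpTo 0 | schmidtSum 2 l.tail = n} =
        ∑ M ∈ partitionsOf n, (0 + 1 - halfPerimeter M) := by
  have hzero : ∀ M ∈ partitionsOf n, (halfPerimeter M ≤ 0 + 1 ↔ M = 0) := fun M hM =>
    halfPerimeter_le_one_iff (mem_partitionsOf.1 hM).1
  have hweight : ∑ M ∈ partitionsOf n, (0 + 1 - halfPerimeter M) =
      #{M ∈ partitionsOf n | M = 0} := by
    rw [card_filter]
    refine sum_congr rfl fun M hM => ?_
    split_ifs with h
    · simp [h, halfPerimeter]
    · have := mt (hzero M hM).1 h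
      omega
  have hmem : (0 : Multiset ℕ) ∈ partitionsOf n ↔ 0 = n := by simp [mem_partitionsOf]
  rw [hweight, filter_congr hzero, filter_eq', strictUpTo, filter_singleton, filter_singleton,
    List.tail_nil, schmidtSum_nil]
  simp only [hmem, and_self]
  split_ifs <;> rfl

theorem card_filter_le_succ {α : Type*} (s : Finset α) (f : α → ℕ) (c : ℕ) :
    #{x ∈ s | f x ≤ c + 1} = #{x ∈ s | f x ≤ c} + #{x ∈ s | f x = c + 1} := by
  simp only [card_filter]
  rw [← sum_add_distrib]
  exact sum_congr rfl fun x _ => by split_ifs <;> omega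

theorem sum_succ_sub {α : Type*} (s : Finset α) (f : α → ℕ) (c : ℕ) :
    ∑ x ∈ s, (c + 1 - f x) = ∑ x ∈ s, (c - f x) + #{x ∈ s | f x ≤ c} := by
  rw [card_filter, ← sum_add_distrib]
  exact sum_congr rfl fun x _ => by split_ifs <;> omega

theorem card_filter_strictUpTo_eq (b n : ℕ) :
    #{l ∈ strictUpTo b | schmidtSum 2 l = n} =
        #{M ∈ partitionsOf n | halfPerimeter M ≤ b + 1} ∧
      #{l ∈ strictUpTo b | schmidtSum 2 l.tail = n} =
        ∑ M ∈ partitionsOf n, (b + 1 - halfPerimeter M) := by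
  induction b generalizing n with
  | zero => exact card_filter_strictUpTo_zero n
  | succ b ih =>
    rw [card_filter_strictUpTo_succ b (q := fun l => b + 1 + schmidtSum 2 l.tail = n)
        fun l => by rw [schmidtSum_two_cons],
      card_filter_strictUpTo_succ b (q := fun l => schmidtSum 2 l = n) fun l => Iff.rfl,
      (ih n).1, (ih n).2, card_filter_le_succ _ halfPerimeter (b + 1),
      sum_succ_sub _ halfPerimeter (b + 1)]
    refine ⟨congrArg _ ?_, rfl⟩
    rcases le_or_gt (b + 1) n with h | h
    · obtain ⟨m, rfl⟩ : ∃ m, n = m + b + 1 := ⟨n - (b + 1), by omega⟩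
      rw [card_filter_halfPerimeter_eq, ← (ih m).2]
      exact congrArg _ (filter_congr fun l _ => by omega)
    · rw [card_eq_zero.2 (filter_eq_empty_iff.2 fun l _ => by omega), eq_comm, card_eq_zero,
        filter_eq_empty_iff]
      intro M hM
      have := halfPerimeter_le_of_mem_partitionsOf hM
      omega

theorem schmidt_problem_general (n : ℕ) :
    Nat.card {l : List ℕ // IsStrict l ∧ schmidtSum 2 l = n} =
      Fintype.card (Nat.Partition n) := by
  rw [Nat.card_congr (Equiv.subtypeEquivRight fun l => mem_filter_strictUpTo_schmidtSum.symm),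
    Nat.card_eq_fintype_card, Fintype.card_coe, (card_filter_strictUpTo_eq n n).1,
    filter_true_of_mem fun M hM => halfPerimeter_le_of_mem_partitionsOf hM, card_partitionsOf]

/-- Schmidt's problem: the number of strictly decreasing sequences of positive integers
whose odd-indexed parts sum to `n` equals the number of partitions of `n`. -/
theorem schmidt_problem (n : ℕ) (hn : 1 ≤ n) :
    Nat.card {l : List ℕ // IsStrict l ∧ schmidtSum 2 l = n} =
      Fintype.card (Nat.Partition n) :=
  schmidt_problem_general n
end

section
/- The number of weakly decreasing finite sequences of positive integers λ₁ ≥ λ₂ ≥ λ₃ ≥ ⋯ whose odd-indexed parts sum to n equals the number of pairs (α, β) of partitions with |α| + |β| = n. -/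
/-!
Conjugation turns the sum of the odd-indexed parts of `λ` into `∑ ⌈c / 2⌉` over the parts `c`
of the conjugate partition, because a column of height `c` meets `⌈c / 2⌉` odd-indexed rows.
A partition with `∑ ⌈c / 2⌉ = n` is in turn the same as a pair `(α, β)` with `|α| + |β| = n`:
its even parts `2a` give `α` and its odd parts `2b - 1` give `β`.
-/

open Finset

namespace YoungDiagram

theorem sum_cells_eq_sum_rowLen {M : Type*} [AddCommMonoid M] (μ : YoungDiagram)
    (f : ℕ × ℕ → M) :
    ∑ c ∈ μ.cells, f c = ∑ i ∈ range (μ.colLen 0), ∑ j ∈ range (μ.rowLen i), f (i, j) := by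
  rw [← sum_fiberwise_of_maps_to (g := Prod.fst) (t := range (μ.colLen 0))]
  · refine sum_congr rfl fun i _ => ?_
    rw [← row, row_eq_prod, sum_product, sum_singleton]
  · intro c hc
    rw [mem_range, ← mem_iff_lt_colLen]
    exact μ.up_left_mem le_rfl (Nat.zero_le _) hc

theorem sum_cells_transpose {M : Type*} [AddCommMonoid M] (μ : YoungDiagram)
    (f : ℕ × ℕ → M) : ∑ c ∈ μ.transpose.cells, f c = ∑ c ∈ μ.cells, f c.swap := by
  simp [transpose, sum_map]

theorem sum_map_rowLens {M : Type*} [AddCommMonoid M] (μ : YoungDiagram) (g : ℕ → M) :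
    (μ.rowLens.map g).sum = ∑ i ∈ range (μ.colLen 0), g (μ.rowLen i) := by
  rw [rowLens, List.map_map, sum_eq_multiset_sum, range_val, Multiset.range, Multiset.map_coe,
    Multiset.sum_coe]
  rfl

/-- Both sides count the cells of `μ` lying in rows `0, k, 2k, …`: the left side row by row,
the right side column by column. -/
theorem schmidtSum_rowLens (k : ℕ) (μ : YoungDiagram) :
    schmidtSum k μ.rowLens = (μ.transpose.rowLens.map (Nat.count (· % k = 0))).sum :=
  calc schmidtSum k μ.rowLens
      = ∑ i ∈ range (μ.colLen 0), ∑ _j ∈ range (μ.rowLen i), if i % k = 0 then 1 else 0 := by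
        rw [schmidtSum, length_rowLens]
        refine sum_congr rfl fun i hi => ?_
        rw [List.getD_eq_getElem _ _ (by simpa using hi), get_rowLens]
        split_ifs <;> simp
    _ = ∑ c ∈ μ.cells, if c.1 % k = 0 then 1 else 0 :=
        (μ.sum_cells_eq_sum_rowLen fun c => if c.1 % k = 0 then 1 else 0).symm
    _ = ∑ c ∈ μ.transpose.cells, if c.2 % k = 0 then 1 else 0 :=
        (μ.sum_cells_transpose fun c => if c.2 % k = 0 then 1 else 0).symm
    _ = ∑ i ∈ range (μ.transpose.colLen 0), ∑ j ∈ range (μ.transpose.rowLen i),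
          if j % k = 0 then 1 else 0 :=
        μ.transpose.sum_cells_eq_sum_rowLen fun c => if c.2 % k = 0 then 1 else 0
    _ = (μ.transpose.rowLens.map (Nat.count (· % k = 0))).sum := by
        simp only [sum_map_rowLens, Nat.count_eq_card_filter_range, card_filter]

def equivPartition : YoungDiagram ≃ {l : List ℕ // IsPartition l} :=
  equivListRowLens.trans
    (Equiv.subtypeEquivRight fun l => by rw [IsPartition, List.sortedGE_iff_pairwise])

end YoungDiagram

theorem Nat.count_mod_two_eq_zero (n : ℕ) : n.count (· % 2 = 0) = (n + 1) / 2 := by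
  induction n with
  | zero => rfl
  | succ n ih => rw [Nat.count_succ, ih]; split_ifs <;> omega

namespace Multiset

theorem map_eq_self {α : Type*} {f : α → α} {s : Multiset α} (h : ∀ x ∈ s, f x = x) :
    s.map f = s :=
  (map_congr rfl h).trans (map_id s)

def parityParts (s : Multiset ℕ) : Multiset ℕ × Multiset ℕ :=
  ((s.filter (· % 2 = 0)).map (· / 2), (s.filter (¬· % 2 = 0)).map fun c => (c + 1) / 2)

def parityMerge (α β : Multiset ℕ) : Multiset ℕ :=
  α.map (2 * ·) + β.map (2 * · - 1)

theorem parityMerge_parityParts (s : Multiset ℕ) :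
    parityMerge (parityParts s).1 (parityParts s).2 = s := by
  rw [parityParts, parityMerge, map_map, map_map]
  conv_rhs => rw [← filter_add_not (· % 2 = 0) s]
  congr 1 <;> refine map_eq_self fun x hx => ?_ <;>
    have := (mem_filter.1 hx).2 <;> simp only [Function.comp_apply] <;> omega

theorem parityParts_parityMerge {α β : Multiset ℕ} (hβ : ∀ b ∈ β, 0 < b) :
    parityParts (parityMerge α β) = (α, β) := by
  have hαe : (α.map (2 * ·)).filter (· % 2 = 0) = α.map (2 * ·) :=
    filter_eq_self.2 fun x hx => by obtain ⟨a, -, rfl⟩ := mem_map.1 hx; omega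
  have hβe : (β.map (2 * · - 1)).filter (· % 2 = 0) = 0 :=
    filter_eq_nil.2 fun x hx => by obtain ⟨b, hb, rfl⟩ := mem_map.1 hx; have := hβ b hb; omega
  have hαo : (α.map (2 * ·)).filter (¬· % 2 = 0) = 0 :=
    filter_eq_nil.2 fun x hx => by obtain ⟨a, -, rfl⟩ := mem_map.1 hx; omega
  have hβo : (β.map (2 * · - 1)).filter (¬· % 2 = 0) = β.map (2 * · - 1) :=
    filter_eq_self.2 fun x hx => by obtain ⟨b, hb, rfl⟩ := mem_map.1 hx; have := hβ b hb; omega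
  rw [parityParts, parityMerge, filter_add, filter_add, hαe, hβe, hαo, hβo, add_zero, zero_add,
    map_map, map_map]
  congr 1
  · exact map_eq_self fun a _ => by simp only [Function.comp_apply]; omega
  · exact map_eq_self fun b hb => by have := hβ b hb; simp only [Function.comp_apply]; omega

theorem pos_of_mem_parityParts_fst {s : Multiset ℕ} (hs : ∀ c ∈ s, 0 < c) {x : ℕ}
    (hx : x ∈ (parityParts s).1) : 0 < x := by
  obtain ⟨c, hc, rfl⟩ := mem_map.1 hx
  have := (mem_filter.1 hc).2
  have := hs c (mem_filter.1 hc).1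
  omega

theorem pos_of_mem_parityParts_snd {s : Multiset ℕ} {x : ℕ} (hx : x ∈ (parityParts s).2) :
    0 < x := by
  obtain ⟨c, hc, rfl⟩ := mem_map.1 hx
  have := (mem_filter.1 hc).2
  omega

theorem pos_of_mem_parityMerge {α β : Multiset ℕ} (hα : ∀ a ∈ α, 0 < a) (hβ : ∀ b ∈ β, 0 < b)
    {x : ℕ} (hx : x ∈ parityMerge α β) : 0 < x := by
  rcases mem_add.1 hx with hx | hx <;> obtain ⟨c, hc, rfl⟩ := mem_map.1 hx
  · have := hα c hc; omega
  · have := hβ c hc; omega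

theorem map_parityMerge {α β : Multiset ℕ} (hβ : ∀ b ∈ β, 0 < b) :
    (parityMerge α β).map (fun c => (c + 1) / 2) = α + β := by
  rw [parityMerge, map_add, map_map, map_map]
  congr 1
  · exact map_eq_self fun a _ => by simp only [Function.comp_apply]; omega
  · exact map_eq_self fun b hb => by have := hβ b hb; simp only [Function.comp_apply]; omega

end Multiset

abbrev PosMultiset : Type := {s : Multiset ℕ // ∀ x ∈ s, 0 < x}

def partitionEquivPosMultiset : {l : List ℕ // IsPartition l} ≃ PosMultiset where
  toFun l := ⟨l.1, l.2.2⟩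
  invFun s := ⟨s.1.sort (· ≥ ·), Multiset.pairwise_sort _ _,
    fun x hx => s.2 x ((Multiset.mem_sort _).1 hx)⟩
  left_inv l := Subtype.ext (List.mergeSort_eq_self _ l.2.1)
  right_inv _ := Subtype.ext (Multiset.sort_eq _ _)

open Multiset in
def PosMultiset.parityEquiv : PosMultiset ≃ PosMultiset × PosMultiset where
  toFun s := (⟨(parityParts s.1).1, fun _ => pos_of_mem_parityParts_fst s.2⟩,
    ⟨(parityParts s.1).2, fun _ => pos_of_mem_parityParts_snd⟩)
  invFun p := ⟨parityMerge p.1.1 p.2.1, fun _ => pos_of_mem_parityMerge p.1.2 p.2.2⟩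
  left_inv s := Subtype.ext (parityMerge_parityParts s.1)
  right_inv p := by
    have h := parityParts_parityMerge (α := p.1.1) p.2.2
    exact Prod.ext (Subtype.ext (congrArg Prod.fst h)) (Subtype.ext (congrArg Prod.snd h))

/-- A pair of partitions `(α, β)` goes to the transpose of the partition with parts
`2a` (`a ∈ α`) and `2b - 1` (`b ∈ β`). -/
def bipartitionEquivYoungDiagram :
    {l : List ℕ // IsPartition l} × {l : List ℕ // IsPartition l} ≃ YoungDiagram :=
  (partitionEquivPosMultiset.prodCongr partitionEquivPosMultiset).trans <|
    PosMultiset.parityEquiv.symm.trans <| partitionEquivPosMultiset.symm.trans <|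
      YoungDiagram.equivPartition.symm.trans YoungDiagram.transposeOrderIso.toEquiv

theorem schmidtSum_rowLens_bipartitionEquivYoungDiagram
    (p : {l : List ℕ // IsPartition l} × {l : List ℕ // IsPartition l}) :
    schmidtSum 2 (bipartitionEquivYoungDiagram p).rowLens = p.1.1.sum + p.2.1.sum := by
  obtain ⟨⟨α, hα⟩, ⟨β, hβ⟩⟩ := p
  set ν := partitionEquivPosMultiset.symm <| PosMultiset.parityEquiv.symm
    (partitionEquivPosMultiset ⟨α, hα⟩, partitionEquivPosMultiset ⟨β, hβ⟩)
  have hν : (YoungDiagram.equivPartition.symm ν).rowLens =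
      (Multiset.parityMerge α β).sort (· ≥ ·) :=
    congrArg Subtype.val (YoungDiagram.equivPartition.apply_symm_apply ν)
  change schmidtSum 2 (YoungDiagram.equivPartition.symm ν).transpose.rowLens = _
  rw [YoungDiagram.schmidtSum_rowLens, YoungDiagram.transpose_transpose, hν,
    funext Nat.count_mod_two_eq_zero, ← Multiset.sum_coe, ← Multiset.map_coe, Multiset.sort_eq,
    Multiset.map_parityMerge hβ.2, Multiset.sum_add, Multiset.sum_coe, Multiset.sum_coe]

/-- Unrestricted Schmidt 2-partitions of `n` are equinumerous with bipartitions of `n`. -/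
theorem unrestricted_schmidt_two (n : ℕ) :
    Nat.card {l : List ℕ // IsPartition l ∧ schmidtSum 2 l = n} =
      Nat.card {p : List ℕ × List ℕ //
        IsPartition p.1 ∧ IsPartition p.2 ∧ p.1.sum + p.2.sum = n} :=
  calc Nat.card {l : List ℕ // IsPartition l ∧ schmidtSum 2 l = n}
      = Nat.card {μ : YoungDiagram // schmidtSum 2 μ.rowLens = n} :=
        Nat.card_congr <| (Equiv.subtypeSubtypeEquivSubtypeInter _ _).symm.trans
          (YoungDiagram.equivPartition.subtypeEquiv fun _ => Iff.rfl).symm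
    _ = Nat.card {p : {l : List ℕ // IsPartition l} × {l : List ℕ // IsPartition l} //
          p.1.1.sum + p.2.1.sum = n} :=
        Nat.card_congr <| (bipartitionEquivYoungDiagram.subtypeEquiv fun p => by
          rw [schmidtSum_rowLens_bipartitionEquivYoungDiagram]).symm
    _ = Nat.card {p : List ℕ × List ℕ //
          IsPartition p.1 ∧ IsPartition p.2 ∧ p.1.sum + p.2.sum = n} :=
        Nat.card_congr
          { toFun p := ⟨(p.1.1.1, p.1.2.1), p.1.1.2, p.1.2.2, p.2⟩
            invFun p := ⟨(⟨p.1.1, p.2.1⟩, ⟨p.1.2, p.2.2.1⟩), p.2.2.2⟩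
            left_inv _ := rfl
            right_inv _ := rfl }
end

section
/- For k ≥ 2, the number of partitions λ₁ ≥ λ₂ ≥ ⋯ of positive integers with λ₁ + λ_{k+1} + λ_{2k+1} + ⋯ = n equals the number of k-tuples (α¹, …, αᵏ) of partitions with |α¹| + ⋯ + |αᵏ| = n. -/
/-!
A partition `λ` (read as `λ₀ ≥ λ₁ ≥ ⋯`, padded with zeros) is determined by its differences
`d j = λ j - λ (j + 1)`, an arbitrary finitely supported `d : ℕ →₀ ℕ`, through `λ i = ∑_{j ≥ i} d j`.
Hence a weighted sum `∑ w i * λ i` equals `∑ (w 0 + ⋯ + w j) * d j`: the Schmidt sum becomes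
`∑ (j / k + 1) * d j` and the size becomes `∑ (j + 1) * d j`. Writing `j = c * k + r` splits `d` into
`k` difference sequences `c ↦ d (c * k + r)`, and `∑ (j / k + 1) * d j` is the total size of the `k`
partitions they encode.
-/

open Finset

def tailSum (d : ℕ →₀ ℕ) (i : ℕ) : ℕ := d.sum fun j m => if i ≤ j then m else 0

def diffLength (d : ℕ →₀ ℕ) : ℕ := d.support.sup (· + 1)

def ofDiffs (d : ℕ →₀ ℕ) : List ℕ := (List.range (diffLength d)).map (tailSum d)

theorem lt_diffLength {d : ℕ →₀ ℕ} {j : ℕ} (hj : d j ≠ 0) : j < diffLength d :=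
  Finset.le_sup (f := (· + 1)) (Finsupp.mem_support_iff.mpr hj)

theorem tailSum_eq_add_tailSum_succ (d : ℕ →₀ ℕ) (i : ℕ) :
    tailSum d i = d i + tailSum d (i + 1) := by
  have split : ∀ j m, (if i ≤ j then m else 0) =
      (if j = i then m else 0) + if i + 1 ≤ j then m else 0 := by
    intro j m
    split_ifs <;> omega
  simp only [tailSum, split, Finsupp.sum_add, Finsupp.sum_ite_self_eq']

theorem tailSum_antitone (d : ℕ →₀ ℕ) : Antitone (tailSum d) :=
  antitone_nat_of_succ_le fun i => by rw [tailSum_eq_add_tailSum_succ d i]; omega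

theorem tailSum_eq_zero {d : ℕ →₀ ℕ} {i : ℕ} (hi : diffLength d ≤ i) : tailSum d i = 0 :=
  Finset.sum_eq_zero fun j hj => by
    have := lt_diffLength (Finsupp.mem_support_iff.mp hj)
    exact if_neg (by omega)

theorem tailSum_pos {d : ℕ →₀ ℕ} {i : ℕ} (hi : i < diffLength d) : 0 < tailSum d i := by
  obtain ⟨j, hj, hij⟩ := Finset.lt_sup_iff.mp hi
  calc 0 < d j := Nat.pos_of_ne_zero (Finsupp.mem_support_iff.mp hj)
    _ ≤ tailSum d j := by rw [tailSum_eq_add_tailSum_succ]; omega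
    _ ≤ tailSum d i := tailSum_antitone d (by omega)

theorem ofDiffs_length (d : ℕ →₀ ℕ) : (ofDiffs d).length = diffLength d := by
  simp [ofDiffs]

theorem ofDiffs_getD (d : ℕ →₀ ℕ) (i : ℕ) : (ofDiffs d).getD i 0 = tailSum d i := by
  rcases lt_or_ge i (diffLength d) with h | h
  · simp [ofDiffs, h]
  · rw [List.getD_eq_default _ _ (by simpa [ofDiffs_length] using h), tailSum_eq_zero h]

theorem isPartition_ofDiffs (d : ℕ →₀ ℕ) : IsPartition (ofDiffs d) := by
  refine ⟨?_, ?_⟩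
  · rw [ofDiffs, List.pairwise_map]
    exact List.pairwise_lt_range.imp fun h => tailSum_antitone d h.le
  · simp only [ofDiffs, List.mem_map, List.mem_range]
    rintro _ ⟨i, hi, rfl⟩
    exact tailSum_pos hi

theorem List.Pairwise.antitone_getD {l : List ℕ} (hl : l.Pairwise (· ≥ ·)) :
    Antitone fun i => l.getD i 0 := by
  refine antitone_nat_of_succ_le fun i => ?_
  rcases lt_or_ge (i + 1) l.length with h | h
  · rw [List.getD_eq_getElem _ _ h, List.getD_eq_getElem _ _ (by omega)]
    exact List.pairwise_iff_getElem.mp hl i (i + 1) _ h (by omega)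
  · rw [List.getD_eq_default _ _ h]
    exact Nat.zero_le _

noncomputable def toDiffs (l : List ℕ) : ℕ →₀ ℕ :=
  Finsupp.onFinset (range l.length) (fun i => l.getD i 0 - l.getD (i + 1) 0) fun i hi => by
    rw [mem_range]
    by_contra h
    rw [List.getD_eq_default _ _ (not_lt.mp h)] at hi
    exact hi (Nat.zero_sub _)

theorem toDiffs_apply (l : List ℕ) (i : ℕ) : toDiffs l i = l.getD i 0 - l.getD (i + 1) 0 := rfl

theorem diffLength_toDiffs_le (l : List ℕ) : diffLength (toDiffs l) ≤ l.length :=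
  Finset.sup_le fun _ hj => mem_range.mp (Finsupp.support_onFinset_subset hj)

theorem tailSum_toDiffs {l : List ℕ} (hl : l.Pairwise (· ≥ ·)) (i : ℕ) :
    tailSum (toDiffs l) i = l.getD i 0 := by
  induction h : l.length - i generalizing i with
  | zero =>
    have := diffLength_toDiffs_le l
    rw [tailSum_eq_zero (by omega), List.getD_eq_default _ _ (by omega)]
  | succ t ih =>
    have hstep : l.getD (i + 1) 0 ≤ l.getD i 0 := hl.antitone_getD (Nat.le_succ i)
    rw [tailSum_eq_add_tailSum_succ, ih (i + 1) (by omega), toDiffs_apply]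
    omega

theorem diffLength_toDiffs {l : List ℕ} (hl : IsPartition l) :
    diffLength (toDiffs l) = l.length := by
  refine le_antisymm (diffLength_toDiffs_le l) (not_lt.mp fun h => ?_)
  have hlast := tailSum_eq_zero (d := toDiffs l) (i := l.length - 1) (by omega)
  rw [tailSum_toDiffs hl.1, List.getD_eq_getElem _ _ (by omega)] at hlast
  exact (hl.2 _ (List.getElem_mem _)).ne' hlast

theorem ofDiffs_toDiffs {l : List ℕ} (hl : IsPartition l) : ofDiffs (toDiffs l) = l := by
  refine List.ext_getElem (by rw [ofDiffs_length, diffLength_toDiffs hl]) fun i h₁ h₂ => ?_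
  have := ofDiffs_getD (toDiffs l) i
  rwa [tailSum_toDiffs hl.1, List.getD_eq_getElem _ _ h₁, List.getD_eq_getElem _ _ h₂] at this

theorem toDiffs_ofDiffs (d : ℕ →₀ ℕ) : toDiffs (ofDiffs d) = d := by
  ext i
  rw [toDiffs_apply, ofDiffs_getD, ofDiffs_getD, tailSum_eq_add_tailSum_succ d i]
  omega

noncomputable def partitionEquivDiffs : {l : List ℕ // IsPartition l} ≃ (ℕ →₀ ℕ) where
  toFun l := toDiffs l
  invFun d := ⟨ofDiffs d, isPartition_ofDiffs d⟩
  left_inv l := Subtype.ext (ofDiffs_toDiffs l.2)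
  right_inv := toDiffs_ofDiffs

noncomputable def partitionSubtypeEquiv (p : List ℕ → Prop) :
    {l : List ℕ // IsPartition l ∧ p l} ≃ {d : ℕ →₀ ℕ // p (ofDiffs d)} :=
  (Equiv.subtypeSubtypeEquivSubtypeInter IsPartition p).symm.trans
    (partitionEquivDiffs.subtypeEquiv fun l => iff_of_eq (congrArg p (ofDiffs_toDiffs l.2).symm))

noncomputable def piPartitionSubtypeEquiv {ι : Type*} (p : (ι → List ℕ) → Prop) :
    {α : ι → List ℕ // (∀ i, IsPartition (α i)) ∧ p α} ≃
      {m : ι → ℕ →₀ ℕ // p fun i => ofDiffs (m i)} :=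
  (Equiv.subtypeSubtypeEquivSubtypeInter _ p).symm.trans
    ((Equiv.subtypePiEquivPi.trans (Equiv.piCongrRight fun _ => partitionEquivDiffs)).subtypeEquiv
      fun α => iff_of_eq (congrArg p (funext fun i => (ofDiffs_toDiffs (α.2 i)).symm)))

theorem sum_range_mul_tailSum (w : ℕ → ℕ) (d : ℕ →₀ ℕ) :
    ∑ i ∈ range (diffLength d), w i * tailSum d i =
      d.sum fun j m => (∑ i ∈ range (j + 1), w i) * m := by
  simp only [tailSum, Finsupp.sum, Finset.mul_sum, mul_ite, mul_zero]
  rw [Finset.sum_comm]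
  refine Finset.sum_congr rfl fun j hj => ?_
  have hjd := lt_diffLength (Finsupp.mem_support_iff.mp hj)
  rw [← Finset.sum_filter, Finset.sum_mul]
  congr 1
  ext i
  simp only [mem_filter, mem_range]
  omega

theorem sum_mul_getD_ofDiffs (w : ℕ → ℕ) (d : ℕ →₀ ℕ) :
    ∑ i ∈ range (ofDiffs d).length, w i * (ofDiffs d).getD i 0 =
      d.sum fun j m => (∑ i ∈ range (j + 1), w i) * m := by
  simp only [ofDiffs_length, ofDiffs_getD, sum_range_mul_tailSum]

theorem List.sum_eq_sum_range_getD (l : List ℕ) :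
    l.sum = ∑ i ∈ Finset.range l.length, l.getD i 0 := by
  induction l with
  | nil => simp
  | cons a t ih => simp [Finset.sum_range_succ', ih, add_comm]

theorem sum_range_succ_boole_dvd (k j : ℕ) :
    ∑ i ∈ range (j + 1), (if k ∣ i then 1 else 0) = j / k + 1 := by
  rw [Finset.sum_range_succ', Finset.sum_boole, Nat.card_multiples]
  simp

theorem schmidtSum_ofDiffs (k : ℕ) (d : ℕ →₀ ℕ) :
    schmidtSum k (ofDiffs d) = d.sum fun j m => (j / k + 1) * m := by
  have := sum_mul_getD_ofDiffs (fun i => if k ∣ i then 1 else 0) d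
  simp only [sum_range_succ_boole_dvd, boole_mul] at this
  rw [← this, schmidtSum]
  simp [Nat.dvd_iff_mod_eq_zero]

theorem sum_ofDiffs (d : ℕ →₀ ℕ) :
    (ofDiffs d).sum = d.sum fun j m => (j + 1) * m := by
  simpa [List.sum_eq_sum_range_getD] using sum_mul_getD_ofDiffs (fun _ => 1) d

-- `sliceEquiv k d r c = d (c * k + r)`
noncomputable def sliceEquiv (k : ℕ) [NeZero k] : (ℕ →₀ ℕ) ≃ (Fin k → ℕ →₀ ℕ) :=
  (Finsupp.equivCongrLeft ((Nat.divModEquiv k).trans (Equiv.prodComm ℕ (Fin k)))).trans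
    (Finsupp.curryEquiv.trans Finsupp.equivFunOnFinite)

theorem sum_sliceEquiv (k : ℕ) [NeZero k] (w : ℕ → ℕ) (d : ℕ →₀ ℕ) :
    ∑ r, (sliceEquiv k d r).sum (fun c m => w c * m) = d.sum fun j m => w (j / k) * m := by
  set f := Finsupp.equivMapDomain ((Nat.divModEquiv k).trans (Equiv.prodComm ℕ (Fin k))) d
  have hf : ∀ r, sliceEquiv k d r = f.curry r := fun r => rfl
  simp only [hf]
  rw [← Finsupp.sum_fintype f.curry (fun _ g => g.sum fun c m => w c * m)
    fun _ => Finsupp.sum_zero_index, Finsupp.sum_curry_index, Finsupp.sum_equivMapDomain]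
  simp [Nat.divModEquiv]

/-- Unrestricted Schmidt `k`-partitions of `n` are equinumerous with
`k`-tuple partitions of `n`. -/
theorem unrestricted_schmidt_k (n k : ℕ) (hk : 2 ≤ k) :
    Nat.card {l : List ℕ // IsPartition l ∧ schmidtSum k l = n} =
      Nat.card {α : Fin k → List ℕ //
        (∀ i, IsPartition (α i)) ∧ ∑ i, (α i).sum = n} := by
  have : NeZero k := ⟨by omega⟩
  calc Nat.card {l : List ℕ // IsPartition l ∧ schmidtSum k l = n}
      = Nat.card {d : ℕ →₀ ℕ // d.sum (fun j m => (j / k + 1) * m) = n} := by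
        rw [Nat.card_congr (partitionSubtypeEquiv _)]
        simp only [schmidtSum_ofDiffs]
    _ = Nat.card {m : Fin k → ℕ →₀ ℕ // ∑ r, (m r).sum (fun c a => (c + 1) * a) = n} :=
        Nat.card_congr ((sliceEquiv k).subtypeEquiv fun d => by
          rw [sum_sliceEquiv k (· + 1)])
    _ = Nat.card {α : Fin k → List ℕ // (∀ i, IsPartition (α i)) ∧ ∑ i, (α i).sum = n} := by
        rw [Nat.card_congr (piPartitionSubtypeEquiv _)]
        simp only [sum_ofDiffs]
end

section
/- The number of partitions of n whose Durfee square has side t equals the number of strictly decreasing sequences of positive integers λ₁ > λ₂ > ⋯ with exactly 2t or 2t−1 parts such that λ₁ + λ₃ + λ₅ + ⋯ = n. -/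
/-- The Durfee square of the partition `l` has side `t`: `t` is the largest integer such
that `l` has at least `t` parts of size at least `t`. -/
def HasDurfeeSide (l : List ℕ) (t : ℕ) : Prop :=
  (t ≤ l.length ∧ ∀ i < t, t ≤ l.getD i 0) ∧
  ¬ (t + 1 ≤ l.length ∧ ∀ i < t + 1, t + 1 ≤ l.getD i 0)

/-!
Removing the `t × t` Durfee square from a partition leaves, to its right, a partition `α` into at
most `t` parts and, below it, a partition into parts of size at most `t`, the conjugate of a
partition `β` into at most `t` parts. So partitions of `n` with Durfee side `t` correspond to pairs
of weakly decreasing lists `α, β` of length `t` (padded by zeros) with `t² + |α| + |β| = n`.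
Zigzagging them into `ν = (a₁+b₁, a₂+b₁, a₂+b₂, …, aₜ+bₜ, bₜ)` gives a weakly decreasing list
of length `2t` whose odd-indexed parts sum to `|α| + |β|`; adding the staircase
`(2t-1, …, 1, 0)` makes it strictly decreasing and adds `1 + 3 + ⋯ + (2t-1) = t²` to that sum.
Dropping a possible final part `0` leaves a Schmidt partition with `2t` or `2t-1` parts.
-/

open List

theorem le_headD_of_mem {l : List ℕ} (hl : l.Pairwise (· ≥ ·)) {x : ℕ} (hx : x ∈ l) :
    x ≤ l.headD 0 := by
  cases l with
  | nil => simp at hx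
  | cons y l => exact (mem_cons.1 hx).elim le_of_eq fun h => (pairwise_cons.1 hl).1 x h

theorem headD_le_of_pairwise_cons {a : ℕ} {l : List ℕ} (h : (a :: l).Pairwise (· ≥ ·)) :
    l.headD 0 ≤ a := by
  cases l with
  | nil => exact Nat.zero_le a
  | cons b l => exact (pairwise_cons.1 h).1 b mem_cons_self

theorem getD_le_of_forall_le {l : List ℕ} {m : ℕ} (h : ∀ x ∈ l, x ≤ m) (j : ℕ) :
    l.getD j 0 ≤ m := by
  rcases lt_or_ge j l.length with hj | hj
  · exact getD_eq_getElem l 0 hj ▸ h _ (getElem_mem hj)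
  · rw [getD_eq_default l 0 hj]; exact Nat.zero_le m

theorem getD_rightpad {α : Type*} (l : List α) (m j : ℕ) (d : α) :
    (l.rightpad m d).getD j d = l.getD j d := by
  simp only [rightpad, getD_eq_getElem?_getD, getElem?_append]
  split
  · rfl
  · simp [getElem?_eq_none (Nat.le_of_not_lt ‹_›)]

theorem lt_countP_iff_le_getD {l : List ℕ} (hl : l.Pairwise (· ≥ ·)) {k : ℕ} (hk : 0 < k) (j : ℕ) :
    j < l.countP (k ≤ ·) ↔ k ≤ l.getD j 0 := by
  induction l generalizing j with
  | nil => simpa using hk.ne'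
  | cons x l ih =>
    obtain ⟨hx, hl⟩ := pairwise_cons.1 hl
    by_cases hkx : k ≤ x
    · cases j with
      | zero => simp [hkx]
      | succ j => simpa [hkx] using ih hl j
    · have hzero : l.countP (k ≤ ·) = 0 :=
        countP_eq_zero.2 fun y hy => by simpa using (hx y hy).trans_lt (not_le.1 hkx)
      have hle : (x :: l).getD j 0 ≤ x :=
        getD_le_of_forall_le (fun y hy => (mem_cons.1 hy).elim le_of_eq (hx y)) j
      simp only [countP_cons, hzero, hkx, decide_false, Bool.false_eq_true, if_false]
      omega

def conjugate (l : List ℕ) : List ℕ :=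
  (range' 1 (l.headD 0)).map fun k => l.countP (k ≤ ·)

@[simp]
theorem length_conjugate (l : List ℕ) : (conjugate l).length = l.headD 0 := by
  simp [conjugate]

theorem getD_conjugate {l : List ℕ} (hl : l.Pairwise (· ≥ ·)) (j : ℕ) :
    (conjugate l).getD j 0 = l.countP (j + 1 ≤ ·) := by
  rcases lt_or_ge j (l.headD 0) with hj | hj
  · rw [getD_eq_getElem _ _ (by simpa using hj)]
    simp [conjugate, Nat.add_comm]
  · rw [getD_eq_default _ _ (by simpa using hj), eq_comm, countP_eq_zero]
    intro x hx
    simpa using (le_headD_of_mem hl hx).trans_lt (Nat.lt_succ_of_le hj)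

theorem pairwise_conjugate (l : List ℕ) : (conjugate l).Pairwise (· ≥ ·) :=
  (pairwise_lt_range' (s := 1) (n := l.headD 0) 1).map _ fun _ _ hab =>
    countP_mono_left fun x _ hx => by simp only [decide_eq_true_eq] at *; omega

theorem le_length_of_mem_conjugate {l : List ℕ} {x : ℕ} (hx : x ∈ conjugate l) :
    x ≤ l.length := by
  obtain ⟨k, -, rfl⟩ := mem_map.1 hx
  exact countP_le_length

theorem pos_of_mem_conjugate {l : List ℕ} (hl : l.Pairwise (· ≥ ·)) {x : ℕ}
    (hx : x ∈ conjugate l) : 0 < x := by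
  obtain ⟨k, hk, rfl⟩ := mem_map.1 hx
  rw [mem_range'_1] at hk
  exact (lt_countP_iff_le_getD hl (by omega) 0).2 (by rw [← headD_eq_getD]; omega)

theorem countP_range'_le (x m : ℕ) : (range' 1 m).countP (· ≤ x) = min x m := by
  induction m with
  | zero => simp
  | succ m ih =>
    rw [range'_concat, countP_append, ih]
    rw [countP_singleton]
    split_ifs with h <;> simp only [decide_eq_true_eq] at h <;> omega

theorem sum_map_countP_range' (l : List ℕ) (m : ℕ) :
    ((range' 1 m).map fun k => l.countP (k ≤ ·)).sum = (l.map fun x => min x m).sum := by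
  induction l with
  | nil => simp
  | cons x l ih =>
    have hx : ((range' 1 m).map fun k => if k ≤ x then 1 else 0).sum = min x m := by
      simp [sum_map_ite, ← countP_eq_length_filter, countP_range'_le]
    simp only [countP_cons, decide_eq_true_eq, sum_map_add, ih, hx, map_cons, sum_cons]
    omega

theorem sum_conjugate {l : List ℕ} (hl : l.Pairwise (· ≥ ·)) : (conjugate l).sum = l.sum := by
  rw [conjugate, sum_map_countP_range',
    map_congr_left fun x hx => min_eq_left (le_headD_of_mem hl hx), map_id']

theorem rightpad_conjugate_conjugate {l : List ℕ} (hl : l.Pairwise (· ≥ ·)) :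
    (conjugate (conjugate l)).rightpad l.length 0 = l := by
  have hlen : (conjugate (conjugate l)).length ≤ l.length := by
    rw [length_conjugate, headD_eq_getD, getD_conjugate hl]
    exact countP_le_length
  refine ext_getElem (by rw [length_rightpad, max_eq_left hlen]) fun j h₁ h₂ => ?_
  rw [← getD_eq_getElem _ 0 h₁, ← getD_eq_getElem _ 0 h₂, getD_rightpad,
    getD_conjugate (pairwise_conjugate l), conjugate, countP_map, Function.comp_def]
  have hcount : ∀ k ∈ range' 1 (l.headD 0),
      decide (j + 1 ≤ l.countP (k ≤ ·)) = true ↔ decide (k ≤ l.getD j 0) = true := by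
    intro k hk
    rw [mem_range'_1] at hk
    simpa using lt_countP_iff_le_getD hl (by omega) j
  rw [countP_congr hcount, countP_range'_le]
  exact min_eq_left (getD_le_of_forall_le (fun x hx => le_headD_of_mem hl hx) j)

theorem conjugate_conjugate {l : List ℕ} (hl : l.Pairwise (· ≥ ·)) (hpos : ∀ x ∈ l, 0 < x) :
    conjugate (conjugate l) = l := by
  have hlen : (conjugate (conjugate l)).length = l.length := by
    rw [length_conjugate, headD_eq_getD, getD_conjugate hl, countP_eq_length]
    simpa [Nat.one_le_iff_ne_zero, Nat.pos_iff_ne_zero] using hpos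
  simpa [rightpad, hlen] using rightpad_conjugate_conjugate hl

theorem conjugate_rightpad (l : List ℕ) (m : ℕ) : conjugate (l.rightpad m 0) = conjugate l := by
  have hhead : (l.rightpad m 0).headD 0 = l.headD 0 := by
    rw [headD_eq_getD, headD_eq_getD, getD_rightpad]
  rw [conjugate, conjugate, hhead]
  refine map_congr_left fun k hk => ?_
  rw [mem_range'_1] at hk
  rw [rightpad, countP_append, countP_replicate, if_neg (by simp only [decide_eq_true_eq]; omega), Nat.add_zero]

theorem hasDurfeeSide_iff {l : List ℕ} (hl : l.Pairwise (· ≥ ·)) {t : ℕ} :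
    HasDurfeeSide l t ↔ t ≤ l.length ∧ (∀ x ∈ l.take t, t ≤ x) ∧ ∀ x ∈ l.drop t, x ≤ t := by
  simp only [HasDurfeeSide, forall_mem_iff_getElem, length_take, length_drop, getElem_take,
    getElem_drop]
  constructor
  · rintro ⟨⟨hlen, hsquare⟩, hmax⟩
    refine ⟨hlen, fun i hi => ?_, fun j hj => ?_⟩
    · have := hsquare i (by omega)
      rwa [getD_eq_getElem _ _ (by omega)] at this
    · by_contra! hbig
      refine hmax ⟨by omega, fun i hi => ?_⟩
      rw [getD_eq_getElem _ _ (by omega)]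
      exact hbig.trans_le (hl.rel_get_of_le (a := ⟨i, by omega⟩) (b := ⟨t + j, by omega⟩)
        (Fin.mk_le_mk.2 (by omega)))
  · rintro ⟨hlen, hsquare, hrest⟩
    refine ⟨⟨hlen, fun i hi => ?_⟩, fun ⟨hlen', hbig⟩ => ?_⟩
    · rw [getD_eq_getElem _ _ (by omega)]
      exact hsquare i (by omega)
    · have h₁ := hbig t (by omega)
      have h₂ := hrest 0 (by omega)
      rw [getD_eq_getElem _ _ (by omega)] at h₁
      simp only [Nat.add_zero] at h₂
      omega

section DurfeeJoin

/-- The partition with a `t × t` Durfee square, the parts of `α` to the right of the square, and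
below it the partition whose conjugate is `β`. -/
def durfeeJoin (t : ℕ) (α β : List ℕ) : List ℕ :=
  α.map (· + t) ++ conjugate β

variable {t : ℕ} {α β : List ℕ}

theorem take_durfeeJoin (hα : α.length = t) : (durfeeJoin t α β).take t = α.map (· + t) :=
  take_left' (by simp [hα])

theorem drop_durfeeJoin (hα : α.length = t) : (durfeeJoin t α β).drop t = conjugate β :=
  drop_left' (by simp [hα])

theorem sum_durfeeJoin (hα : α.length = t) (hβ : β.Pairwise (· ≥ ·)) :
    (durfeeJoin t α β).sum = t * t + α.sum + β.sum := by
  simp only [durfeeJoin, sum_append, sum_map_add, map_id', map_const', sum_replicate, smul_eq_mul,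
    sum_conjugate hβ, hα]
  ring

theorem isPartition_durfeeJoin (hα : α.length = t) (hαs : α.Pairwise (· ≥ ·))
    (hβ : β.Pairwise (· ≥ ·)) (hβt : β.length ≤ t) : IsPartition (durfeeJoin t α β) := by
  have hconj : ∀ x ∈ conjugate β, x ≤ t := fun _ hx => (le_length_of_mem_conjugate hx).trans hβt
  refine ⟨pairwise_append.2 ⟨hαs.map _ fun a b h => by omega, pairwise_conjugate β, ?_⟩, ?_⟩
  · rintro _ ha b hb
    obtain ⟨a, -, rfl⟩ := mem_map.1 ha
    have := hconj b hb
    omega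
  · rintro x hx
    rcases mem_append.1 hx with hx | hx
    · obtain ⟨a, ha, rfl⟩ := mem_map.1 hx
      have := length_pos_of_mem ha
      omega
    · exact pos_of_mem_conjugate hβ hx

theorem hasDurfeeSide_durfeeJoin (hα : α.length = t) (hαs : α.Pairwise (· ≥ ·))
    (hβ : β.Pairwise (· ≥ ·)) (hβt : β.length ≤ t) : HasDurfeeSide (durfeeJoin t α β) t := by
  rw [hasDurfeeSide_iff (isPartition_durfeeJoin hα hαs hβ hβt).1, take_durfeeJoin hα,
    drop_durfeeJoin hα]
  refine ⟨by simp [durfeeJoin, hα], fun x hx => ?_,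
    fun x hx => (le_length_of_mem_conjugate hx).trans hβt⟩
  obtain ⟨a, -, rfl⟩ := mem_map.1 hx
  omega

theorem exists_durfeeJoin_eq {μ : List ℕ} (hμ : IsPartition μ) (hd : HasDurfeeSide μ t) :
    ∃ α β : List ℕ, α.Pairwise (· ≥ ·) ∧ β.Pairwise (· ≥ ·) ∧ α.length = t ∧ β.length = t ∧
      durfeeJoin t α β = μ := by
  obtain ⟨hsorted, hpos⟩ := hμ
  obtain ⟨hlen, hsquare, hrest⟩ := (hasDurfeeSide_iff hsorted).1 hd
  have hrest_sorted : (μ.drop t).Pairwise (· ≥ ·) := hsorted.sublist (drop_sublist t μ)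
  have hconj_len : (conjugate (μ.drop t)).length ≤ t := by
    rw [length_conjugate]
    cases h : μ.drop t with
    | nil => exact Nat.zero_le t
    | cons x _ => exact hrest x (h ▸ mem_cons_self)
  refine ⟨(μ.take t).map (· - t), (conjugate (μ.drop t)).rightpad t 0,
    (hsorted.sublist (take_sublist t μ)).map _ fun a b h => by omega, ?_, by simp [hlen],
    by rw [length_rightpad, max_eq_left hconj_len], ?_⟩
  · refine pairwise_append.2 ⟨pairwise_conjugate _, ?_, fun _ _ b hb => ?_⟩ <;>
      simp_all [pairwise_replicate]
  · have hmap : ((μ.take t).map (· - t)).map (· + t) = μ.take t := by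
      rw [map_map]
      exact (map_congr_left fun x hx => by have := hsquare x hx; simp; omega).trans (map_id _)
    rw [durfeeJoin, hmap, conjugate_rightpad,
      conjugate_conjugate hrest_sorted fun x hx => hpos x (mem_of_mem_drop hx), take_append_drop]

end DurfeeJoin

theorem schmidtSum_eq_sum_range (k : ℕ) {l : List ℕ} {N : ℕ} (hN : l.length ≤ N) :
    schmidtSum k l = ∑ i ∈ Finset.range N, if i % k = 0 then l.getD i 0 else 0 := by
  rw [schmidtSum, ← Finset.sum_range_add_sum_Ico _ hN, left_eq_add]
  refine Finset.sum_eq_zero fun i hi => ?_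
  rw [getD_eq_default l 0 (Finset.mem_Ico.1 hi).1, ite_self]

theorem schmidtSum_rightpad (k : ℕ) (l : List ℕ) (m : ℕ) :
    schmidtSum k (l.rightpad m 0) = schmidtSum k l := by
  rw [schmidtSum, schmidtSum_eq_sum_range k (N := (l.rightpad m 0).length) (by simp)]
  simp only [getD_rightpad]

theorem schmidtSum_two_cons_cons (x y : ℕ) (l : List ℕ) :
    schmidtSum 2 (x :: y :: l) = x + schmidtSum 2 l := by
  have hmod : ∀ i : ℕ, (i + 1 + 1) % 2 = i % 2 := fun i => by omega
  rw [schmidtSum, schmidtSum, length_cons, length_cons, Finset.sum_range_succ',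
    Finset.sum_range_succ']
  simp only [hmod, getD_cons_succ, getD_cons_zero]
  norm_num
  omega

/-- `zigzag [a₁, …, aₜ] [b₁, …, bₜ] = [a₁ + b₁, a₂ + b₁, a₂ + b₂, …, aₜ + bₜ, bₜ]`. -/
def zigzag : List ℕ → List ℕ → List ℕ
  | a :: α, b :: β => (a + b) :: (α.headD 0 + b) :: zigzag α β
  | _, _ => []

theorem length_zigzag : ∀ {α β : List ℕ}, α.length = β.length →
    (zigzag α β).length = 2 * β.length
  | [], [], _ => rfl
  | _ :: α, _ :: β, h => by
    simp only [zigzag, length_cons] at h ⊢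
    rw [length_zigzag (by omega)]
    omega

theorem headD_zigzag {α β : List ℕ} (h : α.length = β.length) :
    (zigzag α β).headD 0 = α.headD 0 + β.headD 0 := by
  cases α <;> cases β <;> simp_all [zigzag]

theorem schmidtSum_zigzag : ∀ {α β : List ℕ}, α.length = β.length →
    schmidtSum 2 (zigzag α β) = α.sum + β.sum
  | [], [], _ => by simp [zigzag, schmidtSum]
  | a :: α, b :: β, h => by
    rw [zigzag, schmidtSum_two_cons_cons, schmidtSum_zigzag (by simpa using h), sum_cons, sum_cons]
    omega

theorem pairwise_zigzag : ∀ {α β : List ℕ}, α.Pairwise (· ≥ ·) → β.Pairwise (· ≥ ·) →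
    α.length = β.length → (zigzag α β).Pairwise (· ≥ ·)
  | [], [], _, _, _ => .nil
  | a :: α, b :: β, hα, hβ, h => by
    have hlen : α.length = β.length := by simpa using h
    have ih := pairwise_zigzag hα.of_cons hβ.of_cons hlen
    have hb := headD_le_of_pairwise_cons hβ
    refine Pairwise.cons_cons_of_trans (by simpa using headD_le_of_pairwise_cons hα) ?_
    refine pairwise_cons.2 ⟨fun z hz => ?_, ih⟩
    have := le_headD_of_mem ih hz
    rw [headD_zigzag hlen] at this
    omega

theorem zigzag_inj {α β α' β' : List ℕ} (hαβ : α.length = β.length)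
    (hαβ' : α'.length = β'.length) (hαα' : α.length = α'.length)
    (h : zigzag α β = zigzag α' β') : α = α' ∧ β = β' := by
  induction α generalizing β α' β' with
  | nil => simp_all [eq_comm (a := 0), length_eq_zero_iff]
  | cons a α ih =>
    obtain ⟨b, β, rfl⟩ := exists_cons_of_length_eq_add_one hαβ.symm
    obtain ⟨a', α', rfl⟩ := exists_cons_of_length_eq_add_one hαα'.symm
    obtain ⟨b', β', rfl⟩ := exists_cons_of_length_eq_add_one hαβ'.symm
    simp only [zigzag, cons.injEq] at h
    obtain ⟨rfl, rfl⟩ := ih (by simpa using hαβ) (by simpa using hαβ') (by simpa using hαα') h.2.2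
    exact ⟨by rw [show a = a' by omega], by rw [show b = b' by omega]⟩

theorem exists_zigzag_eq : ∀ (t : ℕ) {ν : List ℕ}, ν.Pairwise (· ≥ ·) → ν.length = 2 * t →
    ∃ α β : List ℕ, α.Pairwise (· ≥ ·) ∧ β.Pairwise (· ≥ ·) ∧ α.length = t ∧ β.length = t ∧
      zigzag α β = ν
  | 0, [], _, _ => ⟨[], [], .nil, .nil, rfl, rfl, rfl⟩
  | t + 1, x :: y :: ν, hν, hlen => by
    obtain ⟨α, β, hα, hβ, hαl, hβl, rfl⟩ :=
      exists_zigzag_eq t hν.of_cons.of_cons (by simp at hlen; omega)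
    have hxy : y ≤ x := (pairwise_cons.1 hν).1 y mem_cons_self
    have hy := headD_le_of_pairwise_cons hν.of_cons
    rw [headD_zigzag (hαl.trans hβl.symm)] at hy
    refine ⟨(x - y + α.headD 0) :: α, (y - α.headD 0) :: β, pairwise_cons.2 ⟨fun z hz => ?_, hα⟩,
      pairwise_cons.2 ⟨fun z hz => ?_, hβ⟩, by simp [hαl], by simp [hβl], ?_⟩
    · have := le_headD_of_mem hα hz
      omega
    · have := le_headD_of_mem hβ hz
      omega
    · simp only [zigzag, cons.injEq, and_true]
      omega

def addStaircase : List ℕ → List ℕ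
  | [] => []
  | x :: l => (x + l.length) :: addStaircase l

@[simp]
theorem length_addStaircase : ∀ l : List ℕ, (addStaircase l).length = l.length
  | [] => rfl
  | _ :: l => by simp [addStaircase, length_addStaircase l]

theorem addStaircase_injective : Function.Injective addStaircase
  | [], [], _ => rfl
  | x :: l, x' :: l', h => by
    simp only [addStaircase, cons.injEq] at h
    obtain rfl := addStaircase_injective h.2
    simpa using h.1

theorem pairwise_addStaircase : ∀ {ν : List ℕ}, ν.Pairwise (· ≥ ·) →
    (addStaircase ν).Pairwise (· > ·)
  | [], _ => .nil
  | [_], _ => pairwise_singleton _ _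
  | x :: y :: ν, h => by
    have hxy : y ≤ x := (pairwise_cons.1 h).1 y mem_cons_self
    have ih := pairwise_addStaircase h.of_cons
    simp only [addStaircase, length_cons] at ih ⊢
    exact ih.cons_cons_of_trans (by omega)

theorem exists_addStaircase_eq : ∀ {l : List ℕ}, l.Pairwise (· > ·) →
    ∃ ν : List ℕ, ν.Pairwise (· ≥ ·) ∧ addStaircase ν = l
  | [], _ => ⟨[], .nil, rfl⟩
  | [x], _ => ⟨[x], pairwise_singleton _ _, rfl⟩
  | x :: y :: l, h => by
    obtain ⟨_ | ⟨y', ν⟩, hν, heq⟩ := exists_addStaircase_eq h.of_cons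
    · simp [addStaircase] at heq
    simp only [addStaircase, cons.injEq] at heq
    obtain ⟨rfl, rfl⟩ := heq
    have hxy : y' + ν.length < x := (pairwise_cons.1 h).1 _ mem_cons_self
    refine ⟨(x - ν.length - 1) :: y' :: ν, hν.cons_cons_of_trans (by omega), ?_⟩
    simp only [addStaircase, length_cons]
    congr 1
    omega

theorem schmidtSum_addStaircase : ∀ (t : ℕ) {ν : List ℕ}, ν.length = 2 * t →
    schmidtSum 2 (addStaircase ν) = schmidtSum 2 ν + t * t
  | 0, [], _ => rfl
  | t + 1, x :: y :: ν, h => by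
    have hν : ν.length = 2 * t := by simp at h; omega
    simp only [addStaircase, length_cons, schmidtSum_two_cons_cons]
    rw [schmidtSum_addStaircase t hν, hν]
    ring

theorem exists_isStrict_eq_or_eq_append_zero : ∀ {l : List ℕ}, l.Pairwise (· > ·) →
    ∃ p, IsStrict p ∧ (l = p ∨ l = p ++ [0])
  | [], _ => ⟨[], ⟨.nil, by simp⟩, .inl rfl⟩
  | x :: l, h => by
    obtain ⟨hx, hl⟩ := pairwise_cons.1 h
    obtain ⟨p, ⟨hp, hpos⟩, hlp⟩ := exists_isStrict_eq_or_eq_append_zero hl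
    rcases Nat.eq_zero_or_pos x with rfl | hx0
    · obtain rfl : l = [] := eq_nil_iff_forall_not_mem.2 fun y hy => by simpa using hx y hy
      exact ⟨[], ⟨.nil, by simp⟩, .inr rfl⟩
    have hpl : ∀ y ∈ p, y ∈ l := fun y hy => by rcases hlp with rfl | rfl <;> simp [hy]
    refine ⟨x :: p, ⟨pairwise_cons.2 ⟨fun y hy => hx y (hpl y hy), hp⟩, ?_⟩, ?_⟩
    · simpa [hx0] using hpos
    · rcases hlp with rfl | rfl <;> simp

theorem filter_pos_rightpad {p : List ℕ} (hp : ∀ x ∈ p, 0 < x) (m : ℕ) :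
    (p.rightpad m 0).filter (0 < ·) = p := by
  rw [rightpad, filter_append, filter_eq_self.2 (by simpa using hp)]
  simp

/-- Pairs of partitions into at most `t` parts, padded by zeros to length `t`. -/
def durfeePairs (n t : ℕ) : Set (List ℕ × List ℕ) :=
  {p | p.1.Pairwise (· ≥ ·) ∧ p.2.Pairwise (· ≥ ·) ∧ p.1.length = t ∧ p.2.length = t ∧
    t * t + p.1.sum + p.2.sum = n}

def weakSchmidt (n t : ℕ) : Set (List ℕ) :=
  {ν | ν.Pairwise (· ≥ ·) ∧ ν.length = 2 * t ∧ t * t + schmidtSum 2 ν = n}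

def strictSchmidt (n t : ℕ) : Set (List ℕ) :=
  {l | l.Pairwise (· > ·) ∧ l.length = 2 * t ∧ schmidtSum 2 l = n}

theorem bijOn_durfeeJoin (n t : ℕ) :
    Set.BijOn (fun p => durfeeJoin t p.1 p.2) (durfeePairs n t)
      {μ | IsPartition μ ∧ μ.sum = n ∧ HasDurfeeSide μ t} := by
  refine ⟨?_, ?_, ?_⟩
  · rintro ⟨α, β⟩ ⟨hα, hβ, hαl, hβl, hsum⟩
    exact ⟨isPartition_durfeeJoin hαl hα hβ hβl.le, by rw [sum_durfeeJoin hαl hβ, hsum],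
      hasDurfeeSide_durfeeJoin hαl hα hβ hβl.le⟩
  · rintro ⟨α, β⟩ ⟨-, hβ, hαl, hβl, -⟩ ⟨α', β'⟩ ⟨-, hβ', hαl', hβl', -⟩ h
    obtain ⟨hmap, hconj⟩ := append_inj h (by simp [hαl, hαl'])
    refine Prod.ext (map_injective_iff.2 (fun a b hab => ?_) hmap) ?_
    · simpa using hab
    · rw [← rightpad_conjugate_conjugate hβ, ← rightpad_conjugate_conjugate hβ', hconj, hβl, hβl']
  · rintro μ ⟨hμ, hsum, hd⟩
    obtain ⟨α, β, hα, hβ, hαl, hβl, rfl⟩ := exists_durfeeJoin_eq hμ hd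
    exact ⟨(α, β), ⟨hα, hβ, hαl, hβl, by rw [← hsum, sum_durfeeJoin hαl hβ]⟩, rfl⟩

theorem bijOn_zigzag (n t : ℕ) :
    Set.BijOn (fun p => zigzag p.1 p.2) (durfeePairs n t) (weakSchmidt n t) := by
  refine ⟨?_, ?_, ?_⟩
  · rintro ⟨α, β⟩ ⟨hα, hβ, hαl, hβl, hsum⟩
    have hlen := hαl.trans hβl.symm
    exact ⟨pairwise_zigzag hα hβ hlen, by rw [length_zigzag hlen, hβl],
      by rw [schmidtSum_zigzag hlen, ← hsum, Nat.add_assoc]⟩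
  · rintro ⟨α, β⟩ ⟨-, -, hαl, hβl, -⟩ ⟨α', β'⟩ ⟨-, -, hαl', hβl', -⟩ h
    obtain ⟨rfl, rfl⟩ :=
      zigzag_inj (hαl.trans hβl.symm) (hαl'.trans hβl'.symm) (hαl.trans hαl'.symm) h
    rfl
  · rintro ν ⟨hν, hlen, hsum⟩
    obtain ⟨α, β, hα, hβ, hαl, hβl, rfl⟩ := exists_zigzag_eq t hν hlen
    refine ⟨(α, β), ⟨hα, hβ, hαl, hβl, ?_⟩, rfl⟩
    rw [← hsum, schmidtSum_zigzag (hαl.trans hβl.symm), Nat.add_assoc]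

theorem bijOn_addStaircase (n t : ℕ) :
    Set.BijOn addStaircase (weakSchmidt n t) (strictSchmidt n t) := by
  refine ⟨?_, addStaircase_injective.injOn, ?_⟩
  · rintro ν ⟨hν, hlen, hsum⟩
    exact ⟨pairwise_addStaircase hν, by simpa using hlen,
      by rw [schmidtSum_addStaircase t hlen, ← hsum, Nat.add_comm]⟩
  · rintro l ⟨hl, hlen, hsum⟩
    obtain ⟨ν, hν, rfl⟩ := exists_addStaircase_eq hl
    rw [length_addStaircase] at hlen
    exact ⟨ν, ⟨hν, hlen, by rw [← hsum, schmidtSum_addStaircase t hlen, Nat.add_comm]⟩, rfl⟩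

theorem bijOn_rightpad (n t : ℕ) :
    Set.BijOn (rightpad (2 * t) 0)
      {l | IsStrict l ∧ (l.length = 2 * t ∨ l.length = 2 * t - 1) ∧ schmidtSum 2 l = n}
      (strictSchmidt n t) := by
  refine ⟨?_, ?_, ?_⟩
  · rintro l ⟨⟨hl, hpos⟩, hlen, hsum⟩
    refine ⟨pairwise_append.2 ⟨hl, pairwise_replicate.2 (.inl (by omega)), ?_⟩,
      by rw [length_rightpad]; omega, by rw [schmidtSum_rightpad, hsum]⟩
    intro a ha b hb
    rw [eq_of_mem_replicate hb]
    exact hpos a ha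
  · rintro l ⟨⟨-, hpos⟩, -⟩ l' ⟨⟨-, hpos'⟩, -⟩ h
    rw [← filter_pos_rightpad hpos (2 * t), h, filter_pos_rightpad hpos']
  · rintro l ⟨hl, hlen, hsum⟩
    obtain ⟨p, hp, rfl | rfl⟩ := exists_isStrict_eq_or_eq_append_zero hl
    · exact ⟨_, ⟨hp, .inl hlen, hsum⟩, by simp [rightpad, hlen]⟩
    · simp only [length_append, length_singleton] at hlen
      have hpad : p.rightpad (2 * t) 0 = p ++ [0] := by simp [rightpad, ← hlen]
      refine ⟨p, ⟨hp, .inr (by omega), ?_⟩, hpad⟩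
      rw [← schmidtSum_rightpad 2 p (2 * t), hpad, hsum]

theorem durfee_schmidt_two_general (n t : ℕ) :
    Nat.card {l : List ℕ // IsPartition l ∧ l.sum = n ∧ HasDurfeeSide l t} =
      Nat.card {l : List ℕ // IsStrict l ∧
        (l.length = 2 * t ∨ l.length = 2 * t - 1) ∧ schmidtSum 2 l = n} := by
  calc _ = Nat.card (durfeePairs n t) := Nat.card_congr ((bijOn_durfeeJoin n t).equiv _).symm
    _ = Nat.card (weakSchmidt n t) := Nat.card_congr ((bijOn_zigzag n t).equiv _)
    _ = Nat.card (strictSchmidt n t) := Nat.card_congr ((bijOn_addStaircase n t).equiv _)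
    _ = _ := Nat.card_congr ((bijOn_rightpad n t).equiv _).symm

/-- Partitions of `n` with Durfee square of side `t` are equinumerous with
Schmidt 2-partitions of `n` with `2t` or `2t - 1` parts. -/
theorem durfee_schmidt_two (n t : ℕ) (ht : 1 ≤ t) :
    Nat.card {l : List ℕ // IsPartition l ∧ l.sum = n ∧ HasDurfeeSide l t} =
      Nat.card {l : List ℕ // IsStrict l ∧
        (l.length = 2 * t ∨ l.length = 2 * t - 1) ∧ schmidtSum 2 l = n} :=
  durfee_schmidt_two_general n t
end

section
/- For positive integers n and t, Schmidt 3-partitions of n with 3t or 3t−1 parts are equinumerous with triples (α, β, γ) of partitions with |α| + |β| + |γ| = n where α is a partition of length t with adjacent parts differing by at least 2, β is a strict partition of length t, and γ is a partition of length at most t. -/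
/-- `l` is a 2-distinct partition: adjacent parts differ by at least 2, all parts positive. -/
def Is2Distinct (l : List ℕ) : Prop :=
  l.Chain' (fun a b => b + 2 ≤ a) ∧ ∀ x ∈ l, 0 < x

/-!
Pad a Schmidt partition with zeros to `λ₀ > λ₁ > ⋯ > λ_{3t-1} ≥ 0`. Differences of consecutive
parts split it uniquely as
`λ_{3i} = aᵢ + bᵢ + cᵢ`, `λ_{3i+1} = a_{i+1} + bᵢ + cᵢ`, `λ_{3i+2} = a_{i+1} + b_{i+1} + cᵢ`
with `a_t = b_t = c_t = 0`, where `a`, `b` are strictly decreasing on `[0, t]` and `c` on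
`[0, t)`; the Schmidt weight `λ₀ + λ₃ + ⋯` becomes `∑ (aᵢ + bᵢ + cᵢ)`. Adding the staircase
`δᵢ = t - 1 - i` to `a` and subtracting it from `c` (which dominates it) turns `(a, b, c)` into
`(α, β, γ)` with `α` 2-distinct of length `t`, `β` strict of length `t` and `γ` a partition of
length at most `t`, without changing the total weight.
-/

namespace Schmidt

open Finset Set

section Padding

variable {l l' : List ℕ}

theorem getD_pos_iff (hl : ∀ x ∈ l, 0 < x) {j : ℕ} : 0 < l.getD j 0 ↔ j < l.length := by
  refine ⟨fun h => ?_, fun h => List.getD_eq_getElem _ _ h ▸ hl _ (List.getElem_mem h)⟩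
  by_contra hj
  rw [List.getD_eq_default _ _ (not_lt.1 hj)] at h
  exact lt_irrefl 0 h

theorem eq_of_getD_eq (hl : ∀ x ∈ l, 0 < x) (hl' : ∀ x ∈ l', 0 < x)
    (h : ∀ j, l.getD j 0 = l'.getD j 0) : l = l' := by
  have hlen : l.length = l'.length :=
    eq_of_forall_lt_iff fun j => by rw [← getD_pos_iff hl, ← getD_pos_iff hl', h]
  refine List.ext_getElem hlen fun j h₁ h₂ => ?_
  rw [← List.getD_eq_getElem _ 0 h₁, ← List.getD_eq_getElem _ 0 h₂, h]

theorem exists_getD_eq {f : ℕ → ℕ} (hf : ∀ j, f (j + 1) ≤ f j) {N : ℕ} (hN : f N = 0) :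
    ∃ l : List ℕ, (∀ x ∈ l, 0 < x) ∧ ∀ j, l.getD j 0 = f j := by
  induction N generalizing f with
  | zero =>
    refine ⟨[], by simp, fun j => ?_⟩
    have := antitone_nat_of_succ_le hf (Nat.zero_le j)
    simp only [List.getD_nil]
    omega
  | succ N ih =>
    obtain h0 | h0 := Nat.eq_zero_or_pos (f 0)
    · exact ih hf (Nat.le_zero.1 (h0 ▸ antitone_nat_of_succ_le hf (Nat.zero_le N)))
    · obtain ⟨l, hl, hlf⟩ := ih (f := fun j => f (j + 1)) (fun j => hf (j + 1)) hN
      refine ⟨f 0 :: l, by simpa [h0] using hl, fun j => ?_⟩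
      cases j <;> simp only [List.getD_cons_zero, List.getD_cons_succ, hlf]

theorem isChain_iff_getD {R : ℕ → ℕ → Prop} :
    l.IsChain R ↔ ∀ j, j + 1 < l.length → R (l.getD j 0) (l.getD (j + 1) 0) := by
  rw [List.isChain_iff_getElem]
  refine forall_congr' fun j => forall_congr' fun hj => ?_
  rw [List.getD_eq_getElem _ _ hj, List.getD_eq_getElem _ _ (by omega)]

theorem sum_range_getD {N : ℕ} (h : l.length ≤ N) : ∑ i ∈ range N, l.getD i 0 = l.sum := by
  induction l generalizing N with
  | nil => simp
  | cons a l ih =>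
    obtain ⟨N, rfl⟩ : ∃ M, N = M + 1 := ⟨N - 1, by simp at h; omega⟩
    simp only [sum_range_succ', List.getD_cons_succ, List.getD_cons_zero, List.sum_cons,
      ih (Nat.le_of_succ_le_succ h), add_comm]

theorem bijOn_getD {P : List ℕ → Prop} {S : Set (ℕ → ℕ)} (φ ψ : (ℕ → ℕ) → ℕ → ℕ)
    (hP : ∀ l, P l → ∀ x ∈ l, 0 < x)
    (hPS : ∀ l, (∀ x ∈ l, 0 < x) → (P l ↔ φ (fun j => l.getD j 0) ∈ S))
    (hψφ : ∀ f, φ f ∈ S → ψ (φ f) = f) (hφψ : ∀ f ∈ S, φ (ψ f) = f)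
    (hψ : ∀ f ∈ S, (∀ j, ψ f (j + 1) ≤ ψ f j) ∧ ∃ N, ψ f N = 0) :
    BijOn (fun l => φ fun j => l.getD j 0) {l | P l} S := by
  refine ⟨fun l hl => (hPS l (hP l hl)).1 hl, fun l hl l' hl' h => ?_, fun f hf => ?_⟩
  · have h' := congrArg ψ h
    simp only at h'
    rw [hψφ _ ((hPS l (hP l hl)).1 hl), hψφ _ ((hPS l' (hP l' hl')).1 hl')] at h'
    exact eq_of_getD_eq (hP l hl) (hP l' hl') (congrFun h')
  · obtain ⟨N, hN⟩ := (hψ f hf).2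
    obtain ⟨l, hl, hlf⟩ := exists_getD_eq (hψ f hf).1 hN
    have hpad : (fun j => l.getD j 0) = ψ f := funext hlf
    refine ⟨l, (hPS l hl).2 ?_, ?_⟩ <;> simp only [hpad, hφψ f hf, hf]

end Padding

theorem sum_range_mul_ite_mod {M : Type*} [AddCommMonoid M] {k : ℕ} (hk : 0 < k) (F : ℕ → M)
    (t : ℕ) : ∑ i ∈ range (k * t), (if i % k = 0 then F i else 0) = ∑ j ∈ range t, F (k * j) := by
  induction t with
  | zero => simp
  | succ t ih =>
    rw [mul_add_one, sum_range_add, ih, sum_range_succ]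
    congr 1
    rw [sum_eq_single 0 (fun x hx hx0 => if_neg (by simp [Nat.mod_eq_of_lt (mem_range.1 hx), hx0]))
      (by simp [hk])]
    simp

theorem schmidtSum_eq {k t : ℕ} (hk : 0 < k) {l : List ℕ} (hl : l.length ≤ k * t) :
    schmidtSum k l = ∑ i ∈ range t, l.getD (k * i) 0 := by
  rw [schmidtSum, ← sum_range_mul_ite_mod hk (fun i => l.getD i 0)]
  refine sum_subset (range_subset_range.2 hl) fun i _ hi => ?_
  rw [List.getD_eq_default _ _ (by simpa using hi), ite_self]

section Sequences

/-- The zero-paddings of strict partitions with exactly `k` parts form `strictSeqs (k + 1) k`;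
those with `k` or `k - 1` parts form `strictSeqs k k`. -/
def strictSeqs (k m : ℕ) : Set (ℕ → ℕ) :=
  {f | (∀ i, i + 1 < k → f (i + 1) < f i) ∧ ∀ i, m ≤ i → f i = 0}

variable {k m : ℕ} {f : ℕ → ℕ}

theorem apply_succ_le_of_mem_strictSeqs (hf : f ∈ strictSeqs k m) (hmk : m ≤ k) (j : ℕ) :
    f (j + 1) ≤ f j := by
  obtain h | h := lt_or_ge (j + 1) k
  · exact (hf.1 j h).le
  · rw [hf.2 (j + 1) (by omega)]
    exact Nat.zero_le _

theorem le_apply_of_mem_strictSeqs (hf : f ∈ strictSeqs k m) {i d : ℕ} (h : i + d < k) : d ≤ f i := by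
  induction d generalizing i with
  | zero => exact Nat.zero_le _
  | succ d ih =>
    have := ih (i := i + 1) (by omega)
    have := hf.1 i (by omega)
    omega

theorem eq_of_add_succ_eq {g : ℕ → ℕ} {N : ℕ} (hN : ∀ i, N ≤ i → f i = g i)
    (h : ∀ i < N, f i + g (i + 1) = g i + f (i + 1)) : f = g := by
  funext i
  induction hd : N - i generalizing i with
  | zero => exact hN i (by omega)
  | succ d ih =>
    have := ih (i + 1) (by omega)
    have := h i (by omega)
    omega

end Sequences

section ListClasses

variable {l : List ℕ} {k : ℕ}

theorem length_le_of_getD_eq_zero (hl : ∀ x ∈ l, 0 < x) (h : l.getD k 0 = 0) : l.length ≤ k :=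
  not_lt.1 fun hk => ((getD_pos_iff hl).2 hk).ne' h

theorem le_length_of_getD_pos (hl : ∀ x ∈ l, 0 < x) (h : ∀ i < k, 0 < l.getD i 0) :
    k ≤ l.length := by
  cases k with
  | zero => exact Nat.zero_le _
  | succ k => exact (getD_pos_iff hl).1 (h k k.lt_succ_self)

theorem isStrict_iff (hl : ∀ x ∈ l, 0 < x) :
    IsStrict l ↔ ∀ j, j + 1 < l.length → l.getD (j + 1) 0 < l.getD j 0 := by
  rw [IsStrict, and_iff_left hl, ← List.isChain_iff_pairwise, isChain_iff_getD]

theorem isPartition_iff (hl : ∀ x ∈ l, 0 < x) :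
    IsPartition l ↔ ∀ j, j + 1 < l.length → l.getD (j + 1) 0 ≤ l.getD j 0 := by
  rw [IsPartition, and_iff_left hl, ← List.isChain_iff_pairwise, isChain_iff_getD]

theorem is2Distinct_iff (hl : ∀ x ∈ l, 0 < x) :
    Is2Distinct l ↔ ∀ j, j + 1 < l.length → l.getD (j + 1) 0 + 2 ≤ l.getD j 0 := by
  rw [Is2Distinct, and_iff_left hl, List.Chain', isChain_iff_getD]

theorem isStrict_and_length_eq_iff (hl : ∀ x ∈ l, 0 < x) :
    IsStrict l ∧ l.length = k ↔ (fun j => l.getD j 0) ∈ strictSeqs (k + 1) k := by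
  simp only [isStrict_iff hl, strictSeqs, Set.mem_ofPred_eq]
  constructor
  · rintro ⟨hc, rfl⟩
    refine ⟨fun i hi => ?_, fun i hi => List.getD_eq_default _ _ hi⟩
    obtain h | h := lt_or_ge (i + 1) l.length
    · exact hc i h
    · have := getD_pos_iff hl (j := i)
      have := getD_pos_iff hl (j := i + 1)
      omega
  · rintro ⟨hs, hz⟩
    have := length_le_of_getD_eq_zero hl (hz k le_rfl)
    have := le_length_of_getD_pos hl (k := k) fun i hi => (Nat.zero_le _).trans_lt (hs i (by omega))
    exact ⟨fun j hj => hs j (by omega), by omega⟩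

theorem isStrict_and_length_iff (hl : ∀ x ∈ l, 0 < x) :
    IsStrict l ∧ (l.length = k ∨ l.length = k - 1) ↔
      (fun j => l.getD j 0) ∈ strictSeqs k k := by
  simp only [isStrict_iff hl, strictSeqs, Set.mem_ofPred_eq]
  constructor
  · rintro ⟨hc, hlen⟩
    refine ⟨fun i hi => ?_, fun i hi => List.getD_eq_default _ _ (by omega)⟩
    obtain h | h := lt_or_ge (i + 1) l.length
    · exact hc i h
    · have := getD_pos_iff hl (j := i)
      have := getD_pos_iff hl (j := i + 1)
      omega
  · rintro ⟨hs, hz⟩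
    have := length_le_of_getD_eq_zero hl (hz k le_rfl)
    have := le_length_of_getD_pos hl (k := k - 1) fun i hi =>
      (Nat.zero_le _).trans_lt (hs i (by omega))
    exact ⟨fun j hj => hs j (by omega), by omega⟩

theorem is2Distinct_and_length_eq_iff (hl : ∀ x ∈ l, 0 < x) :
    Is2Distinct l ∧ l.length = k ↔
      (fun j => l.getD j 0 - (k - 1 - j)) ∈ strictSeqs (k + 1) k := by
  simp only [is2Distinct_iff hl, strictSeqs, Set.mem_ofPred_eq]
  constructor
  · rintro ⟨hc, rfl⟩
    -- strictness puts every part above the staircase, so the subtractions are exact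
    have hs := (isStrict_and_length_eq_iff hl).1
      ⟨(isStrict_iff hl).2 fun j hj => by have := hc j hj; omega, rfl⟩
    refine ⟨fun i hi => ?_, fun i hi => by rw [List.getD_eq_default _ _ hi, Nat.zero_sub]⟩
    have := le_apply_of_mem_strictSeqs hs (i := i) (d := l.length - i) (by omega)
    obtain h | h := lt_or_ge (i + 1) l.length
    · have := hc i h
      have := le_apply_of_mem_strictSeqs hs (i := i + 1) (d := l.length - (i + 1)) (by omega)
      omega
    · rw [List.getD_eq_default _ _ h]
      omega
  · rintro ⟨hs, hz⟩
    have hpos : ∀ i < k, k - 1 - i < l.getD i 0 := fun i hi => by have := hs i (by omega); omega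
    have := length_le_of_getD_eq_zero hl (k := k) (by have := hz k le_rfl; omega)
    have := le_length_of_getD_pos hl fun i hi => (Nat.zero_le _).trans_lt (hpos i hi)
    refine ⟨fun j hj => ?_, by omega⟩
    have := hs j (by omega)
    have := hpos (j + 1) (by omega)
    omega

theorem isPartition_and_length_le_iff (hl : ∀ x ∈ l, 0 < x) :
    IsPartition l ∧ l.length ≤ k ↔ (fun j => l.getD j 0 + (k - 1 - j)) ∈ strictSeqs k k := by
  simp only [isPartition_iff hl, strictSeqs, Set.mem_ofPred_eq]
  constructor
  · rintro ⟨hc, hlen⟩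
    refine ⟨fun i hi => ?_, fun i hi => ?_⟩
    · obtain h | h := lt_or_ge (i + 1) l.length
      · have := hc i h
        omega
      · rw [List.getD_eq_default _ _ h]
        omega
    · rw [List.getD_eq_default _ _ (hlen.trans hi)]
      omega
  · rintro ⟨hs, hz⟩
    have := length_le_of_getD_eq_zero hl (k := k) (by have := hz k le_rfl; omega)
    exact ⟨fun j hj => by have := hs j (by omega); omega, by omega⟩

end ListClasses

section Interleave

/-- `interleave3 (a, b, c)` is `a₀ + b₀ + c₀, a₁ + b₀ + c₀, a₁ + b₁ + c₀, a₁ + b₁ + c₁, …`: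
at each step exactly one of the three indices advances. -/
def interleave3 (p : (ℕ → ℕ) × (ℕ → ℕ) × (ℕ → ℕ)) (j : ℕ) : ℕ :=
  p.1 ((j + 2) / 3) + p.2.1 ((j + 1) / 3) + p.2.2 (j / 3)

def tailSum (t : ℕ) (d : ℕ → ℕ) (i : ℕ) : ℕ :=
  ∑ m ∈ Ico i t, d m

def deinterleave3 (t : ℕ) (v : ℕ → ℕ) : (ℕ → ℕ) × (ℕ → ℕ) × (ℕ → ℕ) :=
  (tailSum t fun m => v (3 * m) - v (3 * m + 1),
    tailSum t fun m => v (3 * m + 1) - v (3 * m + 2),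
    tailSum t fun m => v (3 * m + 2) - v (3 * m + 3))

def strictTriples (t : ℕ) : Set ((ℕ → ℕ) × (ℕ → ℕ) × (ℕ → ℕ)) :=
  strictSeqs (t + 1) t ×ˢ strictSeqs (t + 1) t ×ˢ strictSeqs t t

theorem exists_eq_three_mul_add (j : ℕ) : ∃ i, j = 3 * i ∨ j = 3 * i + 1 ∨ j = 3 * i + 2 :=
  ⟨j / 3, by omega⟩

variable (p : (ℕ → ℕ) × (ℕ → ℕ) × (ℕ → ℕ)) (i : ℕ) {t : ℕ} {v : ℕ → ℕ}

theorem interleave3_three_mul : interleave3 p (3 * i) = p.1 i + p.2.1 i + p.2.2 i := by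
  rw [interleave3, show (3 * i + 2) / 3 = i by omega, show (3 * i + 1) / 3 = i by omega,
    show 3 * i / 3 = i by omega]

theorem interleave3_three_mul_add_one :
    interleave3 p (3 * i + 1) = p.1 (i + 1) + p.2.1 i + p.2.2 i := by
  rw [interleave3, show (3 * i + 1 + 2) / 3 = i + 1 by omega,
    show (3 * i + 1 + 1) / 3 = i by omega, show (3 * i + 1) / 3 = i by omega]

theorem interleave3_three_mul_add_two :
    interleave3 p (3 * i + 2) = p.1 (i + 1) + p.2.1 (i + 1) + p.2.2 i := by
  rw [interleave3, show (3 * i + 2 + 2) / 3 = i + 1 by omega,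
    show (3 * i + 2 + 1) / 3 = i + 1 by omega, show (3 * i + 2) / 3 = i by omega]

theorem tailSum_of_lt (d : ℕ → ℕ) {i : ℕ} (h : i < t) :
    tailSum t d i = d i + tailSum t d (i + 1) :=
  sum_eq_sum_Ico_succ_bot h d

theorem tailSum_of_le (d : ℕ → ℕ) {i : ℕ} (h : t ≤ i) : tailSum t d i = 0 := by
  rw [tailSum, Finset.Ico_eq_empty_of_le h, sum_empty]

theorem mapsTo_interleave3 : MapsTo interleave3 (strictTriples t) (strictSeqs (3 * t) (3 * t)) := by
  rintro p ⟨⟨ha, ha0⟩, ⟨hb, hb0⟩, hc, hc0⟩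
  refine ⟨fun j hj => ?_, fun j hj => ?_⟩
  · obtain ⟨i, rfl | rfl | rfl⟩ := exists_eq_three_mul_add j
    · rw [interleave3_three_mul_add_one, interleave3_three_mul]
      have := ha i (by omega)
      omega
    · rw [interleave3_three_mul_add_two, interleave3_three_mul_add_one]
      have := hb i (by omega)
      omega
    · rw [show 3 * i + 2 + 1 = 3 * (i + 1) by ring, interleave3_three_mul,
        interleave3_three_mul_add_two]
      have := hc i (by omega)
      omega
  · rw [interleave3, ha0 _ (by omega), hb0 _ (by omega), hc0 _ (by omega)]

theorem injOn_interleave3 : InjOn interleave3 (strictTriples t) := by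
  rintro p ⟨⟨-, ha⟩, ⟨-, hb⟩, -, hc⟩ p' ⟨⟨-, ha'⟩, ⟨-, hb'⟩, -, hc'⟩ h
  have h0 i := congrFun h (3 * i)
  have h1 i := congrFun h (3 * i + 1)
  have h2 i := congrFun h (3 * i + 2)
  simp only [interleave3_three_mul, interleave3_three_mul_add_one,
    interleave3_three_mul_add_two] at h0 h1 h2
  refine Prod.ext ?_ (Prod.ext ?_ ?_) <;> refine eq_of_add_succ_eq (N := t) ?_ fun i _ => ?_
  · exact fun i hi => (ha i hi).trans (ha' i hi).symm
  · have := h0 i; have := h1 i; omega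
  · exact fun i hi => (hb i hi).trans (hb' i hi).symm
  · have := h1 i; have := h2 i; omega
  · exact fun i hi => (hc i hi).trans (hc' i hi).symm
  · have := h2 i; have := h0 (i + 1); omega

theorem deinterleave3_mem (hv : v ∈ strictSeqs (3 * t) (3 * t)) :
    deinterleave3 t v ∈ strictTriples t := by
  refine ⟨⟨fun i hi => ?_, fun i hi => tailSum_of_le _ hi⟩,
    ⟨fun i hi => ?_, fun i hi => tailSum_of_le _ hi⟩, fun i hi => ?_, fun i hi => tailSum_of_le _ hi⟩
  · have := hv.1 (3 * i) (by omega)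
    simp only [deinterleave3, tailSum_of_lt _ (Nat.lt_of_succ_lt_succ hi)]
    omega
  · have : v (3 * i + 2) < v (3 * i + 1) := hv.1 (3 * i + 1) (by omega)
    simp only [deinterleave3, tailSum_of_lt _ (Nat.lt_of_succ_lt_succ hi)]
    omega
  · have : v (3 * i + 3) < v (3 * i + 2) := hv.1 (3 * i + 2) (by omega)
    simp only [deinterleave3, tailSum_of_lt _ (Nat.lt_of_succ_lt hi)]
    omega

theorem interleave3_deinterleave3 (hv : v ∈ strictSeqs (3 * t) (3 * t)) :
    interleave3 (deinterleave3 t v) = v := by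
  have hanti := apply_succ_le_of_mem_strictSeqs hv le_rfl
  refine eq_of_add_succ_eq (N := 3 * t) (fun j hj => ?_) fun j hj => ?_
  · simp only [interleave3, deinterleave3, tailSum_of_le _ (by omega : t ≤ (j + 2) / 3),
      tailSum_of_le _ (by omega : t ≤ (j + 1) / 3), tailSum_of_le _ (by omega : t ≤ j / 3),
      hv.2 j hj]
  obtain ⟨i, rfl | rfl | rfl⟩ := exists_eq_three_mul_add j
  · have := hanti (3 * i)
    simp only [interleave3_three_mul, interleave3_three_mul_add_one, deinterleave3,
      tailSum_of_lt _ (by omega : i < t)]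
    omega
  · have : v (3 * i + 2) ≤ v (3 * i + 1) := hanti (3 * i + 1)
    rw [show 3 * i + 1 + 1 = 3 * i + 2 by ring]
    simp only [interleave3_three_mul_add_one, interleave3_three_mul_add_two, deinterleave3,
      tailSum_of_lt _ (by omega : i < t)]
    omega
  · have : v (3 * i + 3) ≤ v (3 * i + 2) := hanti (3 * i + 2)
    rw [show 3 * i + 2 + 1 = 3 * (i + 1) by ring]
    simp only [interleave3_three_mul, interleave3_three_mul_add_two, deinterleave3,
      tailSum_of_lt _ (by omega : i < t)]
    rw [mul_add_one]
    omega

variable (t)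

theorem bijOn_interleave3 : BijOn interleave3 (strictTriples t) (strictSeqs (3 * t) (3 * t)) :=
  ⟨mapsTo_interleave3, injOn_interleave3,
    fun _ hv => ⟨_, deinterleave3_mem hv, interleave3_deinterleave3 hv⟩⟩

end Interleave

theorem bijOn_inter_setOf {α β : Type*} {f : α → β} {s : Set α} {t : Set β} {P : α → Prop}
    {Q : β → Prop} (h : BijOn f s t) (hPQ : ∀ x ∈ s, P x ↔ Q (f x)) :
    BijOn f (s ∩ {x | P x}) (t ∩ {y | Q y}) := by
  refine ⟨fun x hx => ⟨h.mapsTo hx.1, (hPQ x hx.1).1 hx.2⟩, h.injOn.mono inter_subset_left,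
    fun y hy => ?_⟩
  obtain ⟨x, hx, rfl⟩ := h.surjOn hy.1
  exact ⟨x, ⟨hx, (hPQ x hx).2 hy.2⟩, rfl⟩

section Components

variable (t : ℕ)

theorem bijOn_is2Distinct :
    BijOn (fun l j => l.getD j 0 - (t - 1 - j)) {l | Is2Distinct l ∧ l.length = t}
      (strictSeqs (t + 1) t) := by
  refine bijOn_getD (fun f j => f j - (t - 1 - j)) (fun f j => f j + (t - 1 - j))
    (fun _ hl => hl.1.2) (fun _ hl => is2Distinct_and_length_eq_iff hl)
    (fun f hf => funext fun j => ?_) (fun f _ => funext fun j => Nat.add_sub_cancel _ _)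
    fun f hf => ⟨fun j => ?_, t, by simp [hf.2 t le_rfl]⟩
  · obtain h | h := lt_or_ge j t
    · have := hf.1 j (by omega)
      beta_reduce at this ⊢
      omega
    · beta_reduce
      omega
  · have := apply_succ_le_of_mem_strictSeqs hf (Nat.le_succ t) j
    omega

theorem bijOn_isStrict :
    BijOn (fun l j => l.getD j 0) {l | IsStrict l ∧ l.length = t} (strictSeqs (t + 1) t) :=
  bijOn_getD id id (fun _ hl => hl.1.2) (fun _ hl => isStrict_and_length_eq_iff hl)
    (fun _ _ => rfl) (fun _ _ => rfl)
    fun _ hf => ⟨apply_succ_le_of_mem_strictSeqs hf (Nat.le_succ t), t, hf.2 t le_rfl⟩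

theorem bijOn_isPartition :
    BijOn (fun l j => l.getD j 0 + (t - 1 - j)) {l | IsPartition l ∧ l.length ≤ t}
      (strictSeqs t t) := by
  refine bijOn_getD (fun f j => f j + (t - 1 - j)) (fun f j => f j - (t - 1 - j))
    (fun _ hl => hl.1.2) (fun _ hl => isPartition_and_length_le_iff hl)
    (fun f _ => funext fun j => Nat.add_sub_cancel _ _) (fun f hf => funext fun j => ?_)
    fun f hf => ⟨fun j => ?_, t, by simp [hf.2 t le_rfl]⟩
  · obtain h | h := lt_or_ge j t
    · have := le_apply_of_mem_strictSeqs hf (i := j) (d := t - 1 - j) (by omega)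
      omega
    · omega
  · obtain h | h := lt_or_ge (j + 1) t
    · have := hf.1 j h
      omega
    · rw [hf.2 (j + 1) h]
      omega

end Components

theorem bijOn_getD_schmidt (t n : ℕ) :
    BijOn (fun l j => l.getD j 0)
      {l | IsStrict l ∧ (l.length = 3 * t ∨ l.length = 3 * t - 1) ∧ schmidtSum 3 l = n}
      (strictSeqs (3 * t) (3 * t) ∩ {v | ∑ i ∈ range t, v (3 * i) = n}) := by
  refine bijOn_getD id id (fun _ hl => hl.1.2) (fun l hl => ?_) (fun _ _ => rfl) (fun _ _ => rfl)
    fun _ hf => ⟨apply_succ_le_of_mem_strictSeqs hf.1 le_rfl, 3 * t, hf.1.2 _ le_rfl⟩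
  rw [← and_assoc, isStrict_and_length_iff hl]
  refine and_congr_right fun h => ?_
  rw [schmidtSum_eq three_pos (length_le_of_getD_eq_zero hl (h.2 _ le_rfl))]
  rfl

theorem bijOn_getD_triple (t n : ℕ) :
    BijOn (fun p => ((fun j => p.1.getD j 0 - (t - 1 - j)), (fun j => p.2.1.getD j 0),
        (fun j => p.2.2.getD j 0 + (t - 1 - j))))
      (({l | Is2Distinct l ∧ l.length = t} ×ˢ {l | IsStrict l ∧ l.length = t} ×ˢ
        {l | IsPartition l ∧ l.length ≤ t}) ∩ {p | p.1.sum + p.2.1.sum + p.2.2.sum = n})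
      (strictTriples t ∩ {q | ∑ i ∈ range t, (q.1 i + q.2.1 i + q.2.2 i) = n}) := by
  refine bijOn_inter_setOf ((bijOn_is2Distinct t).prodMap
    ((bijOn_isStrict t).prodMap (bijOn_isPartition t))) fun p hp => ?_
  have hα := (bijOn_is2Distinct t).mapsTo hp.1
  obtain ⟨⟨-, hαlen⟩, ⟨-, hβlen⟩, -, hγlen⟩ := hp
  rw [← sum_range_getD hαlen.le, ← sum_range_getD hβlen.le, ← sum_range_getD hγlen,
    ← sum_add_distrib, ← sum_add_distrib]
  refine Eq.congr_left (sum_congr rfl fun i hi => ?_)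
  -- `aᵢ > 0` puts `αᵢ` above the staircase
  have := hα.1 i (by simpa using hi)
  dsimp only at this ⊢
  omega

theorem bijOn_interleave3_weight (t n : ℕ) :
    BijOn interleave3 (strictTriples t ∩ {q | ∑ i ∈ range t, (q.1 i + q.2.1 i + q.2.2 i) = n})
      (strictSeqs (3 * t) (3 * t) ∩ {v | ∑ i ∈ range t, v (3 * i) = n}) :=
  bijOn_inter_setOf (bijOn_interleave3 t) fun _ _ => by simp only [interleave3_three_mul]

end Schmidt

theorem schmidt_three_general (n t : ℕ) :
    Nat.card {l : List ℕ // IsStrict l ∧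
        (l.length = 3 * t ∨ l.length = 3 * t - 1) ∧ schmidtSum 3 l = n} =
      Nat.card {p : List ℕ × List ℕ × List ℕ //
        Is2Distinct p.1 ∧ p.1.length = t ∧
        IsStrict p.2.1 ∧ p.2.1.length = t ∧
        IsPartition p.2.2 ∧ p.2.2.length ≤ t ∧
        p.1.sum + p.2.1.sum + p.2.2.sum = n} :=
  calc _ = _ := Nat.card_congr (Schmidt.bijOn_getD_schmidt t n).equiv
    _ = _ := (Nat.card_congr (Schmidt.bijOn_interleave3_weight t n).equiv).symm
    _ = _ := (Nat.card_congr (Schmidt.bijOn_getD_triple t n).equiv).symm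
    _ = _ := Nat.card_congr <| Equiv.subtypeEquivRight fun p => by
      simp only [Set.mem_inter_iff, Set.mem_prod, Set.mem_ofPred_eq, and_assoc]

/-- Andrews–Paule: Schmidt 3-partitions of `n` with `3t` or `3t-1` parts are
equinumerous with triples `(α, β, γ)` of total weight `n` where `α` is 2-distinct of
length `t`, `β` is strict of length `t`, and `γ` is a partition of length at most `t`. -/
theorem schmidt_three (n t : ℕ) (hn : 1 ≤ n) (ht : 1 ≤ t) :
    Nat.card {l : List ℕ // IsStrict l ∧
        (l.length = 3 * t ∨ l.length = 3 * t - 1) ∧ schmidtSum 3 l = n} =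
      Nat.card {p : List ℕ × List ℕ × List ℕ //
        Is2Distinct p.1 ∧ p.1.length = t ∧
        IsStrict p.2.1 ∧ p.2.1.length = t ∧
        IsPartition p.2.2 ∧ p.2.2.length ≤ t ∧
        p.1.sum + p.2.1.sum + p.2.2.sum = n} :=
  schmidt_three_general n t
end

section
/- For positive integers n and t, the number of triples (α, β, γ) of partitions of total weight n with α 2-distinct of length t, β strict of length t, and γ an arbitrary partition of length at most t, equals the number of triples (μ, ν, ω) of strict partitions of total weight n with ℓ(μ) = ℓ(ν) = t and ℓ(ω) ∈ {t−1, t}. -/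
/-!
Subtracting the staircase `δ_t = (t - 1, …, 1, 0)` turns a 2-distinct partition with `t` parts
into a strict partition with `t` parts and lowers the weight by `C(t, 2)`. Padding an arbitrary
partition with at most `t` parts by zeros to length `t` and adding `δ_t` gives a strictly decreasing
sequence in which at most the last entry vanishes, i.e. a strict partition with `t - 1` or `t`
parts, and raises the weight by `C(t, 2)`. Both maps are invertible, the two weight shifts cancel
and `β` is left alone, which gives a weight-preserving bijection between the two sets of triples.
-/

namespace List

theorem sum_filter_ne_zero : ∀ l : List ℕ, (l.filter (· ≠ 0)).sum = l.sum
  | [] => rfl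
  | a :: l => by
    by_cases ha : a = 0
    · rw [filter_cons_of_neg (by simpa using ha), sum_filter_ne_zero l, sum_cons, ha,
        zero_add]
    · rw [filter_cons_of_pos (by simpa using ha), sum_cons, sum_cons,
        sum_filter_ne_zero l]

theorem filter_ne_zero_rightpad {l : List ℕ} (hl : ∀ x ∈ l, 0 < x) (t : ℕ) :
    (l.rightpad t 0).filter (· ≠ 0) = l := by
  simp only [rightpad, filter_append]
  rw [filter_eq_self.mpr (by simpa [Nat.pos_iff_ne_zero] using hl)]
  simp

theorem rightpad_filter_ne_zero : ∀ {l : List ℕ}, l.Pairwise (· ≥ ·) →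
    (l.filter (· ≠ 0)).rightpad l.length 0 = l
  | [], _ => rfl
  | a :: l, hl => by
    rw [pairwise_cons] at hl
    by_cases ha : a = 0
    · subst ha
      have hl0 : ∀ x ∈ l, x = 0 := fun x hx => by simpa using hl.1 x hx
      rw [filter_cons_of_neg (by simp), filter_eq_nil_iff.mpr (by simpa using hl0)]
      conv_rhs => rw [eq_replicate_iff.mpr ⟨rfl, hl0⟩]
      simp [rightpad, replicate_succ]
    · have := rightpad_filter_ne_zero hl.2
      rw [filter_cons_of_pos (by simpa using ha)]
      simpa [rightpad] using this

theorem length_le_length_filter_ne_zero_add_one : ∀ {l : List ℕ}, l.Pairwise (· > ·) →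
    l.length ≤ (l.filter (· ≠ 0)).length + 1
  | [], _ => by simp
  | a :: l, hl => by
    rw [pairwise_cons] at hl
    by_cases ha : a = 0
    · subst ha
      have : l = [] := eq_nil_iff_forall_not_mem.mpr fun x hx => by simpa using hl.1 x hx
      simp [this]
    · have := length_le_length_filter_ne_zero_add_one hl.2
      rw [filter_cons_of_pos (by simpa using ha), length_cons, length_cons]
      omega

theorem pairwise_rightpad {R : ℕ → ℕ → Prop} {l : List ℕ} (hl : l.Pairwise R)
    (hR : ∀ x ∈ l, R x 0) {t : ℕ} (h0 : t - l.length ≤ 1 ∨ R 0 0) :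
    (l.rightpad t 0).Pairwise R := by
  rw [rightpad, pairwise_append, pairwise_replicate]
  exact ⟨hl, h0, fun x hx y hy => (eq_of_mem_replicate hy) ▸ hR x hx⟩

end List

theorem Is2Distinct.isChain_gt {l : List ℕ} (h : Is2Distinct l) : l.IsChain (· > ·) :=
  h.1.imp fun _ _ h => by omega

theorem isStrict_filter_ne_zero {l : List ℕ} (h : l.Pairwise (· > ·)) :
    IsStrict (l.filter (· ≠ 0)) :=
  ⟨h.filter _, fun x hx => by simpa [Nat.pos_iff_ne_zero] using (List.mem_filter.mp hx).2⟩

theorem isPartition_filter_ne_zero {l : List ℕ} (h : l.Pairwise (· ≥ ·)) :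
    IsPartition (l.filter (· ≠ 0)) :=
  ⟨h.filter _, fun x hx => by simpa [Nat.pos_iff_ne_zero] using (List.mem_filter.mp hx).2⟩

theorem IsPartition.pairwise_rightpad {l : List ℕ} (h : IsPartition l) (t : ℕ) :
    (l.rightpad t 0).Pairwise (· ≥ ·) :=
  List.pairwise_rightpad h.1 (fun _ _ => Nat.zero_le _) (Or.inr le_rfl)

theorem IsStrict.pairwise_rightpad {l : List ℕ} (h : IsStrict l) {t : ℕ}
    (ht : t - l.length ≤ 1) : (l.rightpad t 0).Pairwise (· > ·) :=
  List.pairwise_rightpad h.1 h.2 (Or.inl ht)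

namespace Staircase

/-- `addStair l = l + (ℓ - 1, …, 1, 0)` entrywise, where `ℓ = l.length`; `subStair` subtracts
the same staircase (with truncated subtraction). -/
def addStair : List ℕ → List ℕ
  | [] => []
  | a :: l => (a + l.length) :: addStair l

def subStair : List ℕ → List ℕ
  | [] => []
  | a :: l => (a - l.length) :: subStair l

@[simp]
theorem length_addStair : ∀ l : List ℕ, (addStair l).length = l.length
  | [] => rfl
  | a :: l => by simp [addStair, length_addStair l]

@[simp]
theorem length_subStair : ∀ l : List ℕ, (subStair l).length = l.length
  | [] => rfl
  | a :: l => by simp [subStair, length_subStair l]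

theorem sum_addStair : ∀ l : List ℕ, (addStair l).sum = l.sum + l.length.choose 2
  | [] => rfl
  | a :: l => by
    simp only [addStair, List.sum_cons, sum_addStair l, List.length_cons, Nat.choose_succ_succ',
      Nat.choose_one_right]
    ring

@[simp]
theorem subStair_addStair : ∀ l : List ℕ, subStair (addStair l) = l
  | [] => rfl
  | a :: l => by simp [addStair, subStair, subStair_addStair l]

theorem length_le_of_isChain_gt :
    ∀ {a : ℕ} {l : List ℕ}, (a :: l).IsChain (· > ·) → l.length ≤ a
  | _, [], _ => Nat.zero_le _
  | _, _ :: _, h => by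
    rw [List.isChain_cons_cons] at h
    have := length_le_of_isChain_gt h.2
    simp only [List.length_cons]
    omega

theorem addStair_subStair : ∀ {l : List ℕ}, l.IsChain (· > ·) → addStair (subStair l) = l
  | [], _ => rfl
  | a :: l, h => by
    have := length_le_of_isChain_gt h
    have ht : l.IsChain (· > ·) := h.tail
    rw [subStair, addStair, length_subStair, addStair_subStair ht]
    congr 1
    omega

theorem isChain_addStair_iff (d : ℕ) :
    ∀ {l : List ℕ}, (addStair l).IsChain (fun a b => b + (d + 1) ≤ a) ↔
      l.IsChain (fun a b => b + d ≤ a)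
  | [] => by simp [addStair]
  | [a] => by simp [addStair]
  | a :: b :: l => by
    have := isChain_addStair_iff d (l := b :: l)
    simp only [addStair] at this ⊢
    rw [List.isChain_cons_cons, List.isChain_cons_cons, this, List.length_cons]
    exact and_congr (by omega) Iff.rfl

theorem forall_pos_addStair_iff :
    ∀ {l : List ℕ}, l.IsChain (· ≥ ·) → ((∀ x ∈ addStair l, 0 < x) ↔ ∀ x ∈ l, 0 < x)
  | [], _ => by simp [addStair]
  | [a], _ => by simp [addStair]
  | a :: b :: l, h => by
    rw [List.isChain_cons_cons] at h
    have := forall_pos_addStair_iff h.2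
    simp only [addStair] at this ⊢
    simp only [List.forall_mem_cons] at this ⊢
    constructor
    · rintro ⟨-, hb⟩
      have := this.1 hb
      exact ⟨by omega, this⟩
    · rintro ⟨ha, hb⟩
      exact ⟨by omega, this.2 hb⟩

theorem pairwise_gt_addStair_iff {l : List ℕ} :
    (addStair l).Pairwise (· > ·) ↔ l.Pairwise (· ≥ ·) := by
  simpa [← List.isChain_iff_pairwise, Nat.add_one_le_iff] using
    isChain_addStair_iff 0 (l := l)

theorem is2Distinct_addStair_iff {l : List ℕ} : Is2Distinct (addStair l) ↔ IsStrict l := by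
  have hchain : (addStair l).IsChain (fun a b => b + 2 ≤ a) ↔ l.Pairwise (· > ·) := by
    simpa [← List.isChain_iff_pairwise, Nat.add_one_le_iff] using
      isChain_addStair_iff 1 (l := l)
  change (addStair l).IsChain _ ∧ _ ↔ _
  rw [IsStrict, hchain]
  exact and_congr_right fun hl => forall_pos_addStair_iff (hl.isChain.imp fun _ _ h => h.le)

def twoDistinctEquivStrict (t : ℕ) :
    {l // Is2Distinct l ∧ l.length = t} ≃ {l // IsStrict l ∧ l.length = t} where
  toFun α := ⟨subStair α,
    is2Distinct_addStair_iff.mp ((addStair_subStair α.2.1.isChain_gt).symm ▸ α.2.1),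
    (length_subStair _).trans α.2.2⟩
  invFun μ := ⟨addStair μ, is2Distinct_addStair_iff.mpr μ.2.1, (length_addStair _).trans μ.2.2⟩
  left_inv α := Subtype.ext (addStair_subStair α.2.1.isChain_gt)
  right_inv μ := Subtype.ext (subStair_addStair μ)

theorem sum_twoDistinctEquivStrict {t : ℕ} (α : {l // Is2Distinct l ∧ l.length = t}) :
    (α : List ℕ).sum = (twoDistinctEquivStrict t α : List ℕ).sum + t.choose 2 := by
  conv_lhs => rw [← addStair_subStair α.2.1.isChain_gt]
  rw [sum_addStair, length_subStair, α.2.2]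
  rfl

theorem pairwise_gt_addStair_rightpad {l : List ℕ} (h : IsPartition l) (t : ℕ) :
    (addStair (l.rightpad t 0)).Pairwise (· > ·) :=
  pairwise_gt_addStair_iff.mpr (h.pairwise_rightpad t)

theorem pairwise_ge_subStair_rightpad {l : List ℕ} (h : IsStrict l) {t : ℕ}
    (ht : t - l.length ≤ 1) : (subStair (l.rightpad t 0)).Pairwise (· ≥ ·) := by
  have hpad := h.pairwise_rightpad ht
  rw [← pairwise_gt_addStair_iff, addStair_subStair hpad.isChain]
  exact hpad

def partitionEquivStrict (t : ℕ) :
    {l // IsPartition l ∧ l.length ≤ t} ≃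
      {l // IsStrict l ∧ (l.length = t - 1 ∨ l.length = t)} where
  toFun γ := ⟨(addStair (γ.1.rightpad t 0)).filter (· ≠ 0), by
    have hc := pairwise_gt_addStair_rightpad γ.2.1 t
    have hlen : (addStair (γ.1.rightpad t 0)).length = t := by simp [γ.2.2]
    refine ⟨isStrict_filter_ne_zero hc, ?_⟩
    have := List.length_le_length_filter_ne_zero_add_one hc
    have := List.length_filter_le (· ≠ 0) (addStair (γ.1.rightpad t 0))
    omega⟩
  invFun ω := ⟨(subStair (ω.1.rightpad t 0)).filter (· ≠ 0), by
    have hc := pairwise_ge_subStair_rightpad ω.2.1 (t := t) (by omega)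
    refine ⟨isPartition_filter_ne_zero hc, ?_⟩
    have := List.length_filter_le (· ≠ 0) (subStair (ω.1.rightpad t 0))
    simp only [length_subStair, List.length_rightpad] at this
    omega⟩
  left_inv γ := Subtype.ext <| by
    have hc := (pairwise_gt_addStair_rightpad γ.2.1 t).imp le_of_lt
    have hpad := List.rightpad_filter_ne_zero hc
    rw [length_addStair, List.length_rightpad, max_eq_left γ.2.2] at hpad
    dsimp only
    rw [hpad, subStair_addStair, List.filter_ne_zero_rightpad γ.2.1.2]
  right_inv ω := Subtype.ext <| by
    have hpad := ω.2.1.pairwise_rightpad (t := t) (by omega)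
    have hc := pairwise_ge_subStair_rightpad ω.2.1 (t := t) (by omega)
    have hpad' := List.rightpad_filter_ne_zero hc
    rw [length_subStair, List.length_rightpad, max_eq_left (by omega)] at hpad'
    dsimp only
    rw [hpad', addStair_subStair hpad.isChain, List.filter_ne_zero_rightpad ω.2.1.2]

theorem sum_partitionEquivStrict {t : ℕ} (γ : {l // IsPartition l ∧ l.length ≤ t}) :
    (partitionEquivStrict t γ : List ℕ).sum = (γ : List ℕ).sum + t.choose 2 := by
  change ((addStair (γ.1.rightpad t 0)).filter (· ≠ 0)).sum = _
  rw [List.sum_filter_ne_zero, sum_addStair, List.length_rightpad, max_eq_left γ.2.2]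
  simp [List.rightpad]

end Staircase

theorem card_triple_congr {ι : Type*} (w : ι → ℕ) {A A' B C C' : ι → Prop} {T : ℕ}
    (e₁ : {a // A a} ≃ {a // A' a}) (e₃ : {c // C c} ≃ {c // C' c})
    (h₁ : ∀ a : {a // A a}, w a = w (e₁ a) + T)
    (h₃ : ∀ c : {c // C c}, w (e₃ c) = w c + T) (n : ℕ) :
    Nat.card {p : ι × ι × ι //
        A p.1 ∧ B p.2.1 ∧ C p.2.2 ∧ w p.1 + w p.2.1 + w p.2.2 = n} =
      Nat.card {p : ι × ι × ι //
        A' p.1 ∧ B p.2.1 ∧ C' p.2.2 ∧ w p.1 + w p.2.1 + w p.2.2 = n} := by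
  have h₁' (a : {a // A' a}) : w (e₁.symm a) = w a + T := by simpa using h₁ (e₁.symm a)
  have h₃' (c : {c // C' c}) : w c = w (e₃.symm c) + T := by simpa using h₃ (e₃.symm c)
  refine Nat.card_congr
    { toFun := fun p => ⟨(e₁ ⟨_, p.2.1⟩, p.1.2.1, e₃ ⟨_, p.2.2.2.1⟩),
        (e₁ _).2, p.2.2.1, (e₃ _).2, ?_⟩
      invFun := fun q => ⟨(e₁.symm ⟨_, q.2.1⟩, q.1.2.1, e₃.symm ⟨_, q.2.2.2.1⟩),
        (e₁.symm _).2, q.2.2.1, (e₃.symm _).2, ?_⟩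
      left_inv := fun p => by simp
      right_inv := fun q => by simp }
  · have := p.2.2.2.2
    have := h₁ ⟨_, p.2.1⟩
    have := h₃ ⟨_, p.2.2.2.1⟩
    dsimp only at *
    omega
  · have := q.2.2.2.2
    have := h₁' ⟨_, q.2.1⟩
    have := h₃' ⟨_, q.2.2.2.1⟩
    dsimp only at *
    omega

theorem staircase_triple_general (n t : ℕ) :
    Nat.card {p : List ℕ × List ℕ × List ℕ //
        Is2Distinct p.1 ∧ p.1.length = t ∧
        IsStrict p.2.1 ∧ p.2.1.length = t ∧
        IsPartition p.2.2 ∧ p.2.2.length ≤ t ∧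
        p.1.sum + p.2.1.sum + p.2.2.sum = n} =
      Nat.card {p : List ℕ × List ℕ × List ℕ //
        IsStrict p.1 ∧ p.1.length = t ∧
        IsStrict p.2.1 ∧ p.2.1.length = t ∧
        IsStrict p.2.2 ∧ (p.2.2.length = t - 1 ∨ p.2.2.length = t) ∧
        p.1.sum + p.2.1.sum + p.2.2.sum = n} := by
  simpa only [and_assoc] using
    card_triple_congr List.sum (B := fun l => IsStrict l ∧ l.length = t)
      (Staircase.twoDistinctEquivStrict t) (Staircase.partitionEquivStrict t)
      Staircase.sum_twoDistinctEquivStrict Staircase.sum_partitionEquivStrict n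

/-- Triples `(α, β, γ)` with `α` 2-distinct of length `t`, `β` strict of length `t`,
`γ` arbitrary of length at most `t`, and total weight `n`, are equinumerous with triples
`(μ, ν, ω)` of strict partitions of total weight `n` with `ℓ(μ) = ℓ(ν) = t` and
`ℓ(ω) ∈ {t-1, t}`. -/
theorem staircase_triple (n t : ℕ) (hn : 1 ≤ n) (ht : 1 ≤ t) :
    Nat.card {p : List ℕ × List ℕ × List ℕ //
        Is2Distinct p.1 ∧ p.1.length = t ∧
        IsStrict p.2.1 ∧ p.2.1.length = t ∧
        IsPartition p.2.2 ∧ p.2.2.length ≤ t ∧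
        p.1.sum + p.2.1.sum + p.2.2.sum = n} =
      Nat.card {p : List ℕ × List ℕ × List ℕ //
        IsStrict p.1 ∧ p.1.length = t ∧
        IsStrict p.2.1 ∧ p.2.1.length = t ∧
        IsStrict p.2.2 ∧ (p.2.2.length = t - 1 ∨ p.2.2.length = t) ∧
        p.1.sum + p.2.1.sum + p.2.2.sum = n} :=
  staircase_triple_general n t
end

section
/- Define Φ mapping a k×t integer matrix A = (a_{i,j}) to the sequence λ of length kt via λ_{(j−1)k+i} = φ(a_{i,j}), where φ(a_{1,j}) = Σ_{s=1}^k a_{s,j}, φ(a_{i,t}) = Σ_{s=i}^k a_{s,t}, and otherwise φ(a_{i,j}) = Σ_{s=i}^k a_{s,j} + Σ_{s=1}^{i−1} a_{s,j+1}. Then Φ is a bijection from k×t integer matrices with entry sum n onto integer sequences (λ₁, …, λ_{kt}) with λ₁ + λ_{k+1} + ⋯ + λ_{(t−1)k+1} = n. -/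
/-!
Read the matrix `A` column by column as a sequence `a` of length `kt`. Then `Φ(A)_m` is the
sliding sum `a_m + ⋯ + a_{m+k-1}`, and sliding sums are inverted by telescoping
`λ_m - λ_{m+1} = a_m - a_{m+k}` along the residue class of `m` modulo `k`. The entry of `Φ(A)`
at position `jk` is the `j`-th column sum, so the constraints on the two sides correspond.
-/

/-- The map `Φ` of Li–Yee (0-indexed): a `k × t` integer matrix `A` (given as a function,
with row index `< k` and column index `< t` relevant) is sent to the sequence of length
`k * t` whose entry at 0-indexed position `m = j * k + i` (`i < k`, `j < t`) is
`Σ_{s=i}^{k-1} A s j + Σ_{s=0}^{i-1} A s (j+1)`, the second sum being absent when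
`j = t - 1`. -/
def phiMap (k t : ℕ) (A : ℕ → ℕ → ℤ) : ℕ → ℤ := fun m =>
  (∑ s ∈ Finset.Ico (m % k) k, A s (m / k)) +
    (if m / k + 1 < t then ∑ s ∈ Finset.range (m % k), A s (m / k + 1) else 0)

open Finset

def supportedBelow (N : ℕ) : Set (ℕ → ℤ) := {a | ∀ m, N ≤ m → a m = 0}

def supportedOnRect (k t : ℕ) : Set (ℕ → ℕ → ℤ) := {A | ∀ i j, k ≤ i ∨ t ≤ j → A i j = 0}

def slidingSum (k : ℕ) (a : ℕ → ℤ) (m : ℕ) : ℤ := ∑ p ∈ range k, a (m + p)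

def slidingSumInv (k t : ℕ) (l : ℕ → ℤ) (m : ℕ) : ℤ :=
  ∑ r ∈ range t, (l (m + r * k) - l (m + r * k + 1))

section SlidingSum

variable {k t : ℕ}

lemma sum_range_sub_add_mul_eq_self {a : ℕ → ℤ} (ha : a ∈ supportedBelow (k * t)) (m : ℕ) :
    ∑ r ∈ range t, (a (m + r * k) - a (m + r * k + k)) = a m := by
  have htel := sum_range_sub' (fun r => a (m + r * k)) t
  simp only [add_mul, one_mul, ← add_assoc, zero_mul, add_zero] at htel
  rw [htel, ha (m + t * k) (by nlinarith), sub_zero]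

lemma slidingSum_sub_slidingSum_succ (a : ℕ → ℤ) (m : ℕ) :
    slidingSum k a m - slidingSum k a (m + 1) = a m - a (m + k) := by
  have htel := sum_range_sub' (fun p => a (m + p)) k
  simp only [← add_assoc, add_zero] at htel
  rw [slidingSum, slidingSum, ← htel, ← sum_sub_distrib]
  exact sum_congr rfl fun p _ => by rw [add_right_comm]

lemma slidingSum_mapsTo :
    Set.MapsTo (slidingSum k) (supportedBelow (k * t)) (supportedBelow (k * t)) :=
  fun a ha m hm => sum_eq_zero fun p _ => ha (m + p) (by omega)

lemma slidingSumInv_mapsTo :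
    Set.MapsTo (slidingSumInv k t) (supportedBelow (k * t)) (supportedBelow (k * t)) :=
  fun l hl m hm => sum_eq_zero fun r _ => by
    rw [hl (m + r * k) (by omega), hl (m + r * k + 1) (by omega), sub_zero]

lemma slidingSumInv_slidingSum {a : ℕ → ℤ} (ha : a ∈ supportedBelow (k * t)) :
    slidingSumInv k t (slidingSum k a) = a := by
  funext m
  simp only [slidingSumInv, slidingSum_sub_slidingSum_succ]
  exact sum_range_sub_add_mul_eq_self ha m

lemma slidingSum_slidingSumInv {l : ℕ → ℤ} (hl : l ∈ supportedBelow (k * t)) :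
    slidingSum k (slidingSumInv k t l) = l := by
  funext m
  have hcol (r : ℕ) : ∑ p ∈ range k, (l (m + p + r * k) - l (m + p + r * k + 1)) =
      l (m + r * k) - l (m + r * k + k) := by
    have htel := sum_range_sub' (fun p => l (m + r * k + p)) k
    simp only [← add_assoc, add_zero] at htel
    rw [← htel]
    exact sum_congr rfl fun p _ => by rw [add_right_comm m p]
  simp only [slidingSum, slidingSumInv]
  rw [sum_comm, sum_congr rfl fun r _ => hcol r]
  exact sum_range_sub_add_mul_eq_self hl m

lemma slidingSum_bijOn :
    Set.BijOn (slidingSum k) (supportedBelow (k * t)) (supportedBelow (k * t)) :=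
  Set.InvOn.bijOn (f' := slidingSumInv k t)
    ⟨fun _ ha => slidingSumInv_slidingSum ha, fun _ hl => slidingSum_slidingSumInv hl⟩
    slidingSum_mapsTo slidingSumInv_mapsTo

end SlidingSum

lemma mul_add_div_eq_of_lt {i k : ℕ} (hi : i < k) (j : ℕ) : (j * k + i) / k = j := by
  rw [add_comm, Nat.add_mul_div_right _ _ (by omega), Nat.div_eq_of_lt hi, zero_add]

def colFlatten (k : ℕ) (A : ℕ → ℕ → ℤ) (m : ℕ) : ℤ := A (m % k) (m / k)

def colUnflatten (k : ℕ) (a : ℕ → ℤ) (i j : ℕ) : ℤ := if i < k then a (j * k + i) else 0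

section ColFlatten

variable {k t : ℕ}

lemma colFlatten_mul_add {i : ℕ} (hi : i < k) (A : ℕ → ℕ → ℤ) (j : ℕ) :
    colFlatten k A (j * k + i) = A i j := by
  rw [colFlatten, Nat.mul_add_mod_of_lt hi, mul_add_div_eq_of_lt hi]

lemma colFlatten_mapsTo :
    Set.MapsTo (colFlatten k) (supportedOnRect k t) (supportedBelow (k * t)) := by
  intro A hA m hm
  apply hA
  rcases Nat.eq_zero_or_pos k with rfl | hk
  · exact Or.inl (Nat.zero_le _)
  · exact Or.inr ((Nat.le_div_iff_mul_le hk).2 (by linarith))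

lemma colUnflatten_mapsTo :
    Set.MapsTo (colUnflatten k) (supportedBelow (k * t)) (supportedOnRect k t) := by
  intro a ha i j hij
  unfold colUnflatten
  split_ifs with hi
  · exact ha _ (by rcases hij with h | h <;> nlinarith)
  · rfl

lemma colUnflatten_colFlatten {A : ℕ → ℕ → ℤ} (hA : A ∈ supportedOnRect k t) :
    colUnflatten k (colFlatten k A) = A := by
  funext i j
  unfold colUnflatten
  split_ifs with hi
  · exact colFlatten_mul_add hi A j
  · exact (hA i j (Or.inl (not_lt.1 hi))).symm

lemma colFlatten_colUnflatten {a : ℕ → ℤ} (ha : a ∈ supportedBelow (k * t)) :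
    colFlatten k (colUnflatten k a) = a := by
  funext m
  rcases Nat.eq_zero_or_pos k with rfl | hk
  · simp [colFlatten, colUnflatten, ha m]
  · simp only [colFlatten, colUnflatten, Nat.mod_lt m hk, if_true, Nat.div_add_mod']

lemma colFlatten_bijOn :
    Set.BijOn (colFlatten k) (supportedOnRect k t) (supportedBelow (k * t)) :=
  Set.InvOn.bijOn (f' := colUnflatten k)
    ⟨fun _ hA => colUnflatten_colFlatten hA, fun _ ha => colFlatten_colUnflatten ha⟩
    colFlatten_mapsTo colUnflatten_mapsTo

end ColFlatten

section PhiMap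

variable {k t : ℕ}

lemma phiMap_mul_add {A : ℕ → ℕ → ℤ} {i j : ℕ} (hi : i < k) :
    phiMap k t A (j * k + i) =
      ∑ s ∈ Ico i k, A s j + if j + 1 < t then ∑ s ∈ range i, A s (j + 1) else 0 := by
  rw [phiMap, Nat.mul_add_mod_of_lt hi, mul_add_div_eq_of_lt hi]

lemma phiMap_mul_self (hk : 0 < k) (A : ℕ → ℕ → ℤ) (j : ℕ) :
    phiMap k t A (j * k) = ∑ s ∈ range k, A s j := by
  have h := phiMap_mul_add (t := t) (A := A) (j := j) hk
  rwa [add_zero, sum_range_zero, ite_self, add_zero, ← range_eq_Ico] at h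

lemma phiMap_eq_slidingSum_colFlatten {A : ℕ → ℕ → ℤ} (hA : ∀ i, A i t = 0) {m : ℕ}
    (hm : m < k * t) : phiMap k t A m = slidingSum k (colFlatten k A) m := by
  have hk : 0 < k := Nat.pos_of_mul_pos_right (Nat.zero_lt_of_lt hm)
  obtain ⟨i, j, hi, hj, rfl⟩ : ∃ i j, i < k ∧ j < t ∧ m = j * k + i :=
    ⟨m % k, m / k, Nat.mod_lt m hk, Nat.div_lt_of_lt_mul hm, (Nat.div_add_mod' m k).symm⟩
  have hsplit := sum_range_add (fun p => colFlatten k A (j * k + i + p)) (k - i) i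
  rw [Nat.sub_add_cancel hi.le] at hsplit
  rw [phiMap_mul_add hi, slidingSum, hsplit, sum_Ico_eq_sum_range]
  congr 1
  · refine sum_congr rfl fun p hp => ?_
    rw [add_assoc, colFlatten_mul_add (by rw [mem_range] at hp; omega)]
  · have hnext : ∀ p ∈ range i, colFlatten k A (j * k + i + (k - i + p)) = A p (j + 1) :=
      fun p hp => by
        rw [show j * k + i + (k - i + p) = (j + 1) * k + p by rw [add_mul]; omega]
        exact colFlatten_mul_add (by rw [mem_range] at hp; omega) A (j + 1)
    rw [sum_congr rfl hnext]
    split_ifs with hjt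
    · rfl
    · rw [show j + 1 = t by omega]
      exact (sum_eq_zero fun p _ => hA p).symm

lemma sum_phiMap_mul_self (A : ℕ → ℕ → ℤ) :
    ∑ j ∈ range t, (if j * k < k * t then phiMap k t A (j * k) else 0) =
      ∑ i ∈ range k, ∑ j ∈ range t, A i j := by
  rcases Nat.eq_zero_or_pos k with rfl | hk
  · simp
  rw [sum_comm]
  refine sum_congr rfl fun j hj => ?_
  rw [if_pos (by rw [mul_comm k]; exact Nat.mul_lt_mul_of_pos_right (mem_range.1 hj) hk),
    phiMap_mul_self hk]

end PhiMap

theorem phiMap_bijOn_general (k t : ℕ) (n : ℤ) :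
    Set.BijOn (fun A m => if m < k * t then phiMap k t A m else 0)
      {A : ℕ → ℕ → ℤ | (∀ i j, k ≤ i ∨ t ≤ j → A i j = 0) ∧
        ∑ i ∈ Finset.range k, ∑ j ∈ Finset.range t, A i j = n}
      {l : ℕ → ℤ | (∀ m, k * t ≤ m → l m = 0) ∧
        ∑ j ∈ Finset.range t, l (j * k) = n} := by
  have hsupp : Set.BijOn (fun A m => if m < k * t then phiMap k t A m else 0)
      (supportedOnRect k t) (supportedBelow (k * t)) := by
    refine (slidingSum_bijOn.comp colFlatten_bijOn).congr fun A hA => funext fun m => ?_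
    split_ifs with hm
    · exact (phiMap_eq_slidingSum_colFlatten (fun i => hA i t (Or.inr le_rfl)) hm).symm
    · exact slidingSum_bijOn.mapsTo (colFlatten_mapsTo hA) m (not_lt.1 hm)
  refine hsupp.inter_mapsTo (s₂ := {A | ∑ i ∈ range k, ∑ j ∈ range t, A i j = n})
    (t₂ := {l | ∑ j ∈ range t, l (j * k) = n}) (fun A hA => ?_) fun A ⟨_, hA⟩ => ?_
  · simpa only [Set.mem_ofPred_eq, sum_phiMap_mul_self] using hA
  · simpa only [Set.mem_ofPred_eq, Set.mem_preimage, sum_phiMap_mul_self] using hA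

/-- `Φ` is a bijection from `k × t` integer matrices with entry sum `n` onto integer
sequences of length `k * t` whose entries at positions `1, k+1, …, (t-1)k+1`
(0-indexed `0, k, …, (t-1)k`) sum to `n`. Matrices and sequences are represented as
functions vanishing outside the relevant index ranges. -/
theorem phiMap_bijOn (k t : ℕ) (hk : 1 ≤ k) (ht : 1 ≤ t) (n : ℤ) :
    Set.BijOn (fun A m => if m < k * t then phiMap k t A m else 0)
      {A : ℕ → ℕ → ℤ | (∀ i j, k ≤ i ∨ t ≤ j → A i j = 0) ∧
        ∑ i ∈ Finset.range k, ∑ j ∈ Finset.range t, A i j = n}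
      {l : ℕ → ℤ | (∀ m, k * t ≤ m → l m = 0) ∧
        ∑ j ∈ Finset.range t, l (j * k) = n} :=
  phiMap_bijOn_general k t n
end

section
/- Let A be a k×t nonnegative integer matrix and Φ(A) the sequence of length kt defined by λ_{(j−1)k+i} = Σ_{s=i}^k a_{s,j} + Σ_{s=1}^{i−1} a_{s,j+1} (with the convention that the column j+1 terms are absent when j = t, and for i = 1 the formula reads Σ_{s=1}^k a_{s,j}). Then Φ(A) is weakly decreasing if and only if every row of A is weakly decreasing. -/
/-- The map `Φ` of Li–Yee (0-indexed, nonnegative entries): a `k × t` matrix `A` of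
natural numbers is sent to the sequence of length `k * t` whose entry at 0-indexed
position `m = j * k + i` (`i < k`, `j < t`) is
`Σ_{s=i}^{k-1} A s j + Σ_{s=0}^{i-1} A s (j+1)`, the second sum being absent when
`j = t - 1`. -/
def phiMapN (k t : ℕ) (A : ℕ → ℕ → ℕ) : ℕ → ℕ := fun m =>
  (∑ s ∈ Finset.Ico (m % k) k, A s (m / k)) +
    (if m / k + 1 < t then ∑ s ∈ Finset.range (m % k), A s (m / k + 1) else 0)

/-!
Passing from position `j * k + i` to the next one moves the single entry `A i j` out of the
first sum and, if column `j + 1` exists, moves `A i (j + 1)` into the second one; this holds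
also across a column boundary `i = k - 1`. Hence consecutive entries of `Φ(A)` differ by
`A i j - A i (j + 1)` (or by `A i j ≥ 0` in the last column), and the two monotonicity
conditions match term by term.
-/

section PhiMap

variable {k t : ℕ} (A : ℕ → ℕ → ℕ)

lemma phiMapN_mul_add {i : ℕ} (j : ℕ) (hi : i < k) :
    phiMapN k t A (j * k + i) =
      (∑ s ∈ Finset.Ico i k, A s j) +
        (if j + 1 < t then ∑ s ∈ Finset.range i, A s (j + 1) else 0) := by
  have hk : 0 < k := by omega
  have hmod : (j * k + i) % k = i := Nat.mul_add_mod_of_lt hi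
  have hdiv : (j * k + i) / k = j := by
    rw [add_comm, Nat.add_mul_div_right _ _ hk, Nat.div_eq_of_lt hi, zero_add]
  simp only [phiMapN, hmod, hdiv]

lemma phiMapN_succ_add_of_succ_lt {i : ℕ} (j : ℕ) (hi : i + 1 < k) :
    phiMapN k t A (j * k + i) + (if j + 1 < t then A i (j + 1) else 0) =
      phiMapN k t A (j * k + i + 1) + A i j := by
  rw [add_assoc, phiMapN_mul_add A j (by omega : i < k), phiMapN_mul_add A j hi,
    Finset.sum_eq_sum_Ico_succ_bot (by omega : i < k), Finset.sum_range_succ]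
  split_ifs <;> omega

lemma phiMapN_succ_add_of_succ_eq {i j : ℕ} (hi : i + 1 = k) (hj : j + 1 < t) :
    phiMapN k t A (j * k + i) + A i (j + 1) = phiMapN k t A (j * k + i + 1) + A i j := by
  subst hi
  have hnext : j * (i + 1) + i + 1 = (j + 1) * (i + 1) + 0 := by ring
  rw [hnext, phiMapN_mul_add A j i.lt_add_one, phiMapN_mul_add A (j + 1) i.succ_pos,
    Nat.Ico_succ_singleton, Finset.sum_singleton, ← Finset.range_eq_Ico,
    Finset.sum_range_succ, if_pos hj]
  simp only [Finset.range_zero, Finset.sum_empty, ite_self]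
  omega

lemma phiMapN_succ_add {i j : ℕ} (hi : i < k) (hm : j * k + i + 1 < k * t) :
    phiMapN k t A (j * k + i) + (if j + 1 < t then A i (j + 1) else 0) =
      phiMapN k t A (j * k + i + 1) + A i j := by
  rcases Nat.lt_or_ge (i + 1) k with hik | hik
  · exact phiMapN_succ_add_of_succ_lt A j hik
  · have hj : j + 1 < t := by
      have : (j + 1) * k < t * k := by rw [add_mul, mul_comm t]; omega
      exact Nat.lt_of_mul_lt_mul_right this
    rw [if_pos hj]
    exact phiMapN_succ_add_of_succ_eq A (by omega) hj

end PhiMap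

theorem phiMap_monotone_iff_general (k t : ℕ) (A : ℕ → ℕ → ℕ) :
    (∀ m, m + 1 < k * t → phiMapN k t A (m + 1) ≤ phiMapN k t A m) ↔
      (∀ i < k, ∀ j, j + 1 < t → A i (j + 1) ≤ A i j) := by
  constructor
  · intro hΦ i hi j hj
    have hm : j * k + i + 1 < k * t := by
      have : (j + 2) * k ≤ t * k := Nat.mul_le_mul_right k hj
      rw [add_mul, mul_comm t] at this
      omega
    have hstep := phiMapN_succ_add A hi hm
    rw [if_pos hj] at hstep
    have := hΦ _ hm
    omega
  · intro hA m hm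
    have hk : 0 < k := Nat.pos_of_mul_pos_right (by omega : 0 < k * t)
    have hdecomp : m = m / k * k + m % k := (Nat.div_add_mod' m k).symm
    have hstep := phiMapN_succ_add A (Nat.mod_lt m hk) (hdecomp ▸ hm)
    rw [← hdecomp] at hstep
    split_ifs at hstep with hj
    · have := hA _ (Nat.mod_lt m hk) _ hj
      omega
    · omega

/-- For a nonnegative `k × t` matrix `A`, the sequence `Φ(A)` is weakly decreasing if
and only if every row of `A` is weakly decreasing. -/
theorem phiMap_monotone_iff (k t : ℕ) (hk : 1 ≤ k) (ht : 1 ≤ t) (A : ℕ → ℕ → ℕ) :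
    (∀ m, m + 1 < k * t → phiMapN k t A (m + 1) ≤ phiMapN k t A m) ↔
      (∀ i < k, ∀ j, j + 1 < t → A i (j + 1) ≤ A i j) :=
  phiMap_monotone_iff_general k t A
end
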